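/- arXiv:1905.04298 — 6 statements merged into one kernel-verified Lean document; each statement's English description precedes it below -/
import Mathlib

section
/- The abelianization R^{ab} = R/R' is generated as a ℤ[H₀]-module by the classes of the three elements aⁿ, bⁿ and [a,b]. -/
namespace Fermat

open scoped commutatorElement

/-- The free group on two generators. -/
abbrev F2 : Type := FreeGroup (Fin 2)

/-- The first generator `a` of `F₂`. -/
def a : F2 := FreeGroup.of 0

/-- The second generator `b` of `F₂`. -/
def b : F2 := FreeGroup.of 1

/-- The group `H₀ = (ℤ/nℤ) × (ℤ/nℤ)`, written multiplicatively. -/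
abbrev H0 (n : ℕ) : Type := Multiplicative (ZMod n × ZMod n)

/-- The homomorphism `φ : F₂ → (ℤ/nℤ) × (ℤ/nℤ)` with `φ(a) = (1,0)`, `φ(b) = (0,1)`. -/
def phi (n : ℕ) : F2 →* H0 n :=
  FreeGroup.lift fun i =>
    Multiplicative.ofAdd (if i = (0 : Fin 2) then ((1 : ZMod n), (0 : ZMod n)) else (0, 1))

/-- `R = ker φ`, the fundamental group of the open Fermat curve of exponent `n`. -/
abbrev R (n : ℕ) : Subgroup F2 := (phi n).ker

theorem pow_n_mem (n : ℕ) (x : F2) : x ^ n ∈ R n := by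
  rw [MonoidHom.mem_ker, map_pow]
  have h : n • Multiplicative.toAdd (phi n x) = 0 := by
    ext <;> simp [ZMod.natCast_self]
  calc (phi n x) ^ n
      = Multiplicative.ofAdd (n • Multiplicative.toAdd (phi n x)) := by
        rw [ofAdd_nsmul, ofAdd_toAdd]
    _ = 1 := by rw [h]; rfl

theorem commutator_mem (n : ℕ) (x y : F2) : ⁅x, y⁆ ∈ R n := by
  rw [MonoidHom.mem_ker, map_commutatorElement, commutatorElement_eq_one_iff_commute]
  exact Commute.all _ _

theorem conj_mem (n : ℕ) (g x : F2) (hx : x ∈ R n) : g * x * g⁻¹ ∈ R n :=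
  Subgroup.Normal.conj_mem inferInstance x hx g

/-- The abelianization `R^{ab} = R/R'` of the fundamental group `R`. -/
abbrev Ab (n : ℕ) : Type := Abelianization ↥(R n)

/-- The class `[x] ∈ R^{ab}` of an element `x ∈ R`. -/
def cls (n : ℕ) (x : F2) (hx : x ∈ R n) : Ab n := Abelianization.of ⟨x, hx⟩

/-- The class `[g x g⁻¹] ∈ R^{ab}`; for `h = φ(g) ∈ H₀` this is the value `h·[x]` of the
conjugation action of `H₀` on `R^{ab}`. -/
def conjCl (n : ℕ) (g x : F2) (hx : x ∈ R n) : Ab n :=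
  cls n (g * x * g⁻¹) (conj_mem n g x hx)

/-- The endomorphism of `R^{ab}` induced by conjugation by `g ∈ F₂`; for `h = φ(g)` this
is the action of `h ∈ H₀` on `R^{ab}`. -/
def conjHom (n : ℕ) (g : F2) : Ab n →* Ab n :=
  Abelianization.map (MulAut.conjNormal g).toMonoidHom

/-!
Modulo `aⁿ`, `bⁿ` and `[a,b]`, the generators `a` and `b` become commuting elements of order
dividing `n`, so the quotient map of `F₂` factors through `φ` and `R` is the normal closure of
these three relators. Thus `R` is generated by their conjugates `g r g⁻¹`, and the classes of
those, which are the translates `φ(g)·[r]`, generate `R^{ab}`.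
-/

section ZModLift

variable {G : Type*} [Group G] {n : ℕ}

noncomputable def zmodPowersHom {x : G} (hx : x ^ n = 1) : Multiplicative (ZMod n) →* G :=
  AddMonoidHom.toMultiplicativeLeft <|
    ZMod.lift n ⟨zmultiplesHom (Additive G) (Additive.ofMul x),
      by simpa [← ofMul_pow] using congrArg Additive.ofMul hx⟩

theorem zmodPowersHom_ofAdd_intCast {x : G} (hx : x ^ n = 1) (k : ℤ) :
    zmodPowersHom hx (.ofAdd (k : ZMod n)) = x ^ k := by
  simp [zmodPowersHom]

theorem exists_monoidHom_zmod_prod {x y : G} (hx : x ^ n = 1) (hy : y ^ n = 1)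
    (hxy : Commute x y) :
    ∃ σ : Multiplicative (ZMod n × ZMod n) →* G,
      σ (.ofAdd (1, 0)) = x ∧ σ (.ofAdd (0, 1)) = y := by
  have hcomm : ∀ i j, Commute (zmodPowersHom hx i) (zmodPowersHom hy j) := by
    intro i j
    obtain ⟨k, hk⟩ := ZMod.intCast_surjective (Multiplicative.toAdd i)
    obtain ⟨l, hl⟩ := ZMod.intCast_surjective (Multiplicative.toAdd j)
    rw [← ofAdd_toAdd i, ← ofAdd_toAdd j, ← hk, ← hl, zmodPowersHom_ofAdd_intCast,
      zmodPowersHom_ofAdd_intCast]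
    exact hxy.zpow_zpow k l
  refine ⟨(MonoidHom.noncommCoprod _ _ hcomm).comp
    (MulEquiv.prodMultiplicative (G := ZMod n) (H := ZMod n)).toMonoidHom, ?_, ?_⟩
  · simpa using zmodPowersHom_ofAdd_intCast hx 1
  · simpa using zmodPowersHom_ofAdd_intCast hy 1

end ZModLift

theorem _root_.Abelianization.closure_of_image_coe_preimage_eq_top {G : Type*} [Group G]
    {H : Subgroup G} {s : Set G} (hH : H = Subgroup.closure s) :
    Subgroup.closure (Abelianization.of '' ((↑) ⁻¹' s : Set H)) = ⊤ := by
  subst hH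
  rw [← MonoidHom.map_closure, Subgroup.closure_closure_coe_preimage,
    Subgroup.map_top_of_surjective _ QuotientGroup.mk_surjective]

theorem phi_a (n : ℕ) : phi n a = .ofAdd (1, 0) := by
  simp [phi, a]

theorem phi_b (n : ℕ) : phi n b = .ofAdd (0, 1) := by
  simp [phi, b]

theorem R_eq_normalClosure (n : ℕ) : R n = Subgroup.normalClosure {a ^ n, b ^ n, ⁅a, b⁆} := by
  set N := Subgroup.normalClosure ({a ^ n, b ^ n, ⁅a, b⁆} : Set F2)
  refine le_antisymm (fun x hx => ?_) (Subgroup.normalClosure_le_normal ?_)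
  · let π := QuotientGroup.mk' N
    have hπ : ∀ r ∈ ({a ^ n, b ^ n, ⁅a, b⁆} : Set F2), π r = 1 := fun r hr =>
      (QuotientGroup.eq_one_iff r).2 (Subgroup.subset_normalClosure hr)
    obtain ⟨σ, hσa, hσb⟩ := exists_monoidHom_zmod_prod (n := n) (x := π a) (y := π b)
      (by rw [← map_pow]; exact hπ _ (by simp)) (by rw [← map_pow]; exact hπ _ (by simp))
      (commutatorElement_eq_one_iff_commute.1
        (by rw [← map_commutatorElement]; exact hπ _ (by simp)))
    have hσφ : σ.comp (phi n) = π := FreeGroup.ext_hom _ _ fun i => by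
      fin_cases i
      · exact (congrArg σ (phi_a n)).trans hσa
      · exact (congrArg σ (phi_b n)).trans hσb
    rw [← QuotientGroup.eq_one_iff]
    change π x = 1
    rw [← hσφ, MonoidHom.comp_apply, hx, map_one]
  · rintro r (rfl | rfl | rfl)
    exacts [pow_n_mem n a, pow_n_mem n b, commutator_mem n a b]

/-- The `ℤ[H₀]`-span of a set of classes is the subgroup generated by their `H₀`-orbits, and
`h = φ(g)` acts on `[r]` as `[g r g⁻¹]`. -/
theorem statement2_general (n : ℕ) :
    Subgroup.closure {z : Ab n | ∃ g : F2,
        z = conjCl n g (a ^ n) (pow_n_mem n a) ∨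
        z = conjCl n g (b ^ n) (pow_n_mem n b) ∨
        z = conjCl n g ⁅a, b⁆ (commutator_mem n a b)} = ⊤ := by
  refine eq_top_mono (Subgroup.closure_mono ?_)
    (Abelianization.closure_of_image_coe_preimage_eq_top (R_eq_normalClosure n))
  rintro _ ⟨⟨y, hy⟩, hconj, rfl⟩
  obtain ⟨r, hr, hrc⟩ := Group.mem_conjugatesOfSet_iff.1 hconj
  obtain ⟨c, rfl⟩ := isConj_iff.1 hrc
  exact ⟨c, by rcases hr with rfl | rfl | rfl <;> simp [conjCl, cls]⟩

/-- `R^{ab}` is generated as a `ℤ[H₀]`-module by the classes of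
`aⁿ`, `bⁿ` and `[a,b]`.  Since the `ℤ[H₀]`-span of a set of classes is the subgroup of
`R^{ab}` generated by the `H₀`-orbits, and the action of `h = φ(g)` on a class `[r]` is
the class `[g r g⁻¹]`, this says that the subgroup of `R^{ab}` generated by all
conjugate classes `[g r g⁻¹]`, `g ∈ F₂`, `r ∈ {aⁿ, bⁿ, [a,b]}`, is all of `R^{ab}`. -/
theorem statement2 (n : ℕ) (hn : 2 ≤ n) :
    Subgroup.closure {z : Ab n | ∃ g : F2,
        z = conjCl n g (a ^ n) (pow_n_mem n a) ∨
        z = conjCl n g (b ^ n) (pow_n_mem n b) ∨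
        z = conjCl n g ⁅a, b⁆ (commutator_mem n a b)} = ⊤ :=
  statement2_general n

end Fermat
end

section
/- For each fixed i with 0 ≤ i ≤ n−2, the ℤ-submodule of R^{ab} generated by the set {(αⁱ)·[[bʲ,a]] : 1 ≤ j ≤ n−1} is equal to the ℤ-submodule generated by the set {(αⁱβʲ)·[[b,a]] : 0 ≤ j ≤ n−2}. -/
/-!
Since `⁅bʲ⁺¹, a⁆ = bʲ ⁅b, a⁆ b⁻ʲ · ⁅bʲ, a⁆`, in `R^{ab}` the element `αⁱ·[[bʲ, a]]` is the sum of
the `(αⁱβᵏ)·[[b, a]]` over `k < j`. The two generating families therefore differ by a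
unitriangular change of generators, which preserves the subgroup they generate.
-/

namespace Fermat

open scoped commutatorElement

section PartialProducts

open Subgroup

variable {G : Type*} [Group G]

theorem _root_.Subgroup.closure_succ_eq_closure_of_succ_eq_mul {x y : ℕ → G} (h0 : x 0 = 1)
    (hsucc : ∀ j, x (j + 1) = y j * x j) (m : ℕ) :
    closure {z | ∃ j : Fin m, z = x ((j : ℕ) + 1)} = closure {z | ∃ j : Fin m, z = y j} := by
  have x_mem_right : ∀ j ≤ m, x j ∈ closure {z | ∃ j : Fin m, z = y j} := by
    intro j
    induction j with
    | zero => intro _; rw [h0]; exact one_mem _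
    | succ k ih =>
      intro hk
      rw [hsucc]
      exact mul_mem (subset_closure ⟨⟨k, by omega⟩, rfl⟩) (ih (by omega))
  have x_mem_left : ∀ j ≤ m, x j ∈ closure {z | ∃ j : Fin m, z = x ((j : ℕ) + 1)}
    | 0, _ => by rw [h0]; exact one_mem _
    | k + 1, hk => subset_closure ⟨⟨k, by omega⟩, rfl⟩
  apply le_antisymm <;> rw [closure_le] <;> rintro z ⟨j, rfl⟩
  · exact x_mem_right _ j.isLt
  · rw [eq_mul_inv_of_mul_eq (hsucc j).symm]
    exact mul_mem (x_mem_left _ j.isLt) (inv_mem (x_mem_left _ j.isLt.le))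

end PartialProducts

lemma cls_congr (n : ℕ) {x y : F2} (hx : x ∈ R n) (h : x = y) :
    cls n x hx = cls n y (h ▸ hx) := by
  subst h; rfl

lemma cls_mul (n : ℕ) {x y : F2} (hx : x ∈ R n) (hy : y ∈ R n) :
    cls n (x * y) (mul_mem hx hy) = cls n x hx * cls n y hy :=
  rfl

lemma conjCl_one (n : ℕ) (g : F2) : conjCl n g 1 (one_mem _) = 1 :=
  (cls_congr n _ (by group)).trans (map_one Abelianization.of)

lemma conjCl_mul (n : ℕ) (g : F2) {x y : F2} (hx : x ∈ R n) (hy : y ∈ R n) :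
    conjCl n g (x * y) (mul_mem hx hy) = conjCl n g x hx * conjCl n g y hy :=
  (cls_congr n _ (by group)).trans (cls_mul n _ _)

lemma conjCl_conj (n : ℕ) (g u : F2) {x : F2} (hx : x ∈ R n) :
    conjCl n g (u * x * u⁻¹) (conj_mem n u x hx) = conjCl n (g * u) x hx :=
  cls_congr n _ (by group)

lemma conjCl_commutator_pow_zero (n : ℕ) (g y z : F2) :
    conjCl n g ⁅y ^ 0, z⁆ (commutator_mem n _ _) = 1 := by
  simp only [pow_zero, commutatorElement_one_left]
  exact conjCl_one n g

lemma conjCl_commutator_pow_succ (n : ℕ) (g y z : F2) (j : ℕ) :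
    conjCl n g ⁅y ^ (j + 1), z⁆ (commutator_mem n _ _) =
      conjCl n (g * y ^ j) ⁅y, z⁆ (commutator_mem n _ _) *
        conjCl n g ⁅y ^ j, z⁆ (commutator_mem n _ _) := by
  rw [← conjCl_conj, ← conjCl_mul]
  exact cls_congr n _ (by rw [pow_succ, commutatorElement_mul_left_eq_conj_mul])

theorem statement4_general (n : ℕ) (i : ℕ) :
    Subgroup.closure {z : Ab n | ∃ j : Fin (n - 1),
        z = conjCl n (a ^ i) ⁅b ^ ((j : ℕ) + 1), a⁆ (commutator_mem n (b ^ ((j : ℕ) + 1)) a)} =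
    Subgroup.closure {z : Ab n | ∃ j : Fin (n - 1),
        z = conjCl n (a ^ i * b ^ (j : ℕ)) ⁅b, a⁆ (commutator_mem n b a)} :=
  Subgroup.closure_succ_eq_closure_of_succ_eq_mul
    (x := fun j => conjCl n (a ^ i) ⁅b ^ j, a⁆ (commutator_mem n _ _))
    (y := fun j => conjCl n (a ^ i * b ^ j) ⁅b, a⁆ (commutator_mem n _ _))
    (conjCl_commutator_pow_zero n _ b a) (conjCl_commutator_pow_succ n _ b a) (n - 1)

/-- for each fixed `0 ≤ i ≤ n-2`, the `ℤ`-submodule (= subgroup) of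
`R^{ab}` generated by `{αⁱ·[[bʲ,a]] : 1 ≤ j ≤ n-1}` equals the one generated by
`{(αⁱβʲ)·[[b,a]] : 0 ≤ j ≤ n-2}` (the action of `α`, `β` being conjugation by `a`,
`b`). -/
theorem statement4 (n : ℕ) (hn : 2 ≤ n) (i : ℕ) (hi : i ≤ n - 2) :
    Subgroup.closure {z : Ab n | ∃ j : Fin (n - 1),
        z = conjCl n (a ^ i) ⁅b ^ ((j : ℕ) + 1), a⁆ (commutator_mem n (b ^ ((j : ℕ) + 1)) a)} =
    Subgroup.closure {z : Ab n | ∃ j : Fin (n - 1),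
        z = conjCl n (a ^ i * b ^ (j : ℕ)) ⁅b, a⁆ (commutator_mem n b a)} :=
  statement4_general n i

end Fermat
end

section
/- In R^{ab} the following identity holds for every n ≥ 2: [(ab)ⁿ] = ( Σ_{m=1}^{n−1} α^m · Σ_{ν=0}^{m−1} β^ν )·[[b,a]] + [aⁿ] + [bⁿ], where the sum of group-ring elements acts on the class [[b,a]]. -/
/-! Since `b a = [b,a] a b`, the defect `(ab)ᵏ (aᵏbᵏ)⁻¹` gains the factor `aᵏ [bᵏ,a] a⁻ᵏ`
from `k` to `k + 1`, so `(ab)ⁿ = (∏_{k<n} aᵏ [bᵏ,a] a⁻ᵏ) aⁿ bⁿ`. In `R^{ab}` the relation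
`[bᵏ⁺¹,a] = bᵏ [b,a] b⁻ᵏ · [bᵏ,a]` expands `[[bᵏ,a]]` as `Σ_{ν<k} βᵛ·[[b,a]]`; the `k = 0`
term is empty. -/

open scoped commutatorElement

section MulPow

variable {G : Type*} [Group G] {N : Subgroup G} (hN : commutator G ≤ N)
include hN

lemma mem_of_abelianization_of_eq_one {g : G} (h : Abelianization.of g = 1) : g ∈ N :=
  hN ((Abelianization.ker_of G) ▸ h)

def commutatorIn (g h : G) : N :=
  ⟨⁅g, h⁆,
    hN (Subgroup.commutator_mem_commutator (Subgroup.mem_top g) (Subgroup.mem_top h))⟩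

def powDefect (x y : G) (k : ℕ) : N :=
  ⟨(x * y) ^ k * (x ^ k * y ^ k)⁻¹, mem_of_abelianization_of_eq_one hN (by simp [mul_pow])⟩

variable [N.Normal]

lemma commutatorIn_pow_succ_left (x y : G) (k : ℕ) :
    commutatorIn hN (y ^ (k + 1)) x =
      MulAut.conjNormal (y ^ k) (commutatorIn hN y x) * commutatorIn hN (y ^ k) x := by
  ext
  simp only [commutatorIn, Subgroup.coe_mul, MulAut.conjNormal_apply, commutatorElement_def]
  group

lemma abelianization_of_commutatorIn_pow_left (x y : G) (k : ℕ) :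
    Abelianization.of (commutatorIn hN (y ^ k) x) =
      ∏ ν ∈ Finset.range k,
        Abelianization.of (MulAut.conjNormal (y ^ ν) (commutatorIn hN y x)) := by
  induction k with
  | zero =>
    rw [Finset.prod_range_zero, ← map_one Abelianization.of]
    congr 1
    ext
    simp [commutatorIn]
  | succ k ih =>
    rw [commutatorIn_pow_succ_left, map_mul, ih, Finset.prod_range_succ, mul_comm]

lemma abelianization_of_conjNormal_commutatorIn_pow_left (g x y : G) (k : ℕ) :
    Abelianization.of (MulAut.conjNormal g (commutatorIn hN (y ^ k) x)) =
      ∏ ν ∈ Finset.range k,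
        Abelianization.of (MulAut.conjNormal (g * y ^ ν) (commutatorIn hN y x)) := by
  have h := congrArg (Abelianization.map (MulAut.conjNormal g).toMonoidHom)
    (abelianization_of_commutatorIn_pow_left hN x y k)
  simpa only [map_prod, Abelianization.map_of, MulEquiv.coe_toMonoidHom, map_mul,
    MulAut.mul_apply] using h

lemma powDefect_succ (x y : G) (k : ℕ) :
    powDefect hN x y (k + 1) =
      powDefect hN x y k * MulAut.conjNormal (x ^ k) (commutatorIn hN (y ^ k) x) := by
  ext
  simp only [powDefect, commutatorIn, Subgroup.coe_mul, MulAut.conjNormal_apply,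
    commutatorElement_def, pow_succ]
  group

lemma abelianization_of_powDefect (x y : G) (n : ℕ) :
    Abelianization.of (powDefect hN x y n) =
      ∏ k ∈ Finset.range n,
        Abelianization.of (MulAut.conjNormal (x ^ k) (commutatorIn hN (y ^ k) x)) := by
  induction n with
  | zero =>
    rw [Finset.prod_range_zero, ← map_one Abelianization.of]
    congr 1
    ext
    simp [powDefect]
  | succ n ih => rw [powDefect_succ, map_mul, ih, Finset.prod_range_succ]

theorem abelianization_of_mul_pow (x y : G) (n : ℕ) (hxy : (x * y) ^ n ∈ N) (hx : x ^ n ∈ N)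
    (hy : y ^ n ∈ N) :
    Abelianization.of (⟨(x * y) ^ n, hxy⟩ : N) =
      (∏ k ∈ Finset.range n, ∏ ν ∈ Finset.range k,
          Abelianization.of (MulAut.conjNormal (x ^ k * y ^ ν) (commutatorIn hN y x))) *
        Abelianization.of (⟨x ^ n, hx⟩ : N) * Abelianization.of (⟨y ^ n, hy⟩ : N) := by
  have h : (⟨(x * y) ^ n, hxy⟩ : N) = powDefect hN x y n * ⟨x ^ n, hx⟩ * ⟨y ^ n, hy⟩ := by
    ext
    simp only [powDefect, Subgroup.coe_mul]
    group
  simp only [h, map_mul, abelianization_of_powDefect,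
    abelianization_of_conjNormal_commutatorIn_pow_left]

end MulPow

namespace Fermat

lemma commutator_le_R (n : ℕ) : commutator F2 ≤ R n :=
  Abelianization.commutator_subset_ker (phi n)

theorem statement6_general (n : ℕ) :
    cls n ((a * b) ^ n) (pow_n_mem n (a * b)) =
      (∏ m ∈ Finset.Ico 1 n, ∏ ν ∈ Finset.range m,
          conjCl n (a ^ m * b ^ ν) ⁅b, a⁆ (commutator_mem n b a)) *
        cls n (a ^ n) (pow_n_mem n a) * cls n (b ^ n) (pow_n_mem n b) := by
  rw [cls,
    abelianization_of_mul_pow (commutator_le_R n) a b n _ (pow_n_mem n a) (pow_n_mem n b)]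
  congr 2
  refine (Finset.prod_subset (fun k hk => ?_) fun k _ hk => ?_).symm
  · exact Finset.mem_range.2 (Finset.mem_Ico.1 hk).2
  · obtain rfl : k = 0 := by simp_all
    exact Finset.prod_range_zero _

/-- in `R^{ab}` (written here multiplicatively; the `NL` statement is the
same identity written additively) one has, for every `n ≥ 2`,
`[(ab)ⁿ] = (Σ_{m=1}^{n-1} α^m Σ_{ν=0}^{m-1} β^ν)·[[b,a]] + [aⁿ] + [bⁿ]`, where
`(α^m β^ν)·[[b,a]]` is the class `[a^m b^ν [b,a] b^{-ν} a^{-m}]`. -/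
theorem statement6 (n : ℕ) (hn : 2 ≤ n) :
    cls n ((a * b) ^ n) (pow_n_mem n (a * b)) =
      (∏ m ∈ Finset.Ico 1 n, ∏ ν ∈ Finset.range m,
          conjCl n (a ^ m * b ^ ν) ⁅b, a⁆ (commutator_mem n b a)) *
        cls n (a ^ n) (pow_n_mem n a) * cls n (b ^ n) (pow_n_mem n b) :=
  statement6_general n

end Fermat
end

section
/- The group R_{k,s−1} is free, freely generated by the union of the following sets (indexed by multi-indices 𝐢 = (i₁,…,i_{s−1}) with 0 ≤ i_j ≤ k−1): A = { (x_{s−1}^k)^(x₁^{i₁}⋯x_{s−2}^{i_{s−2}}) }, and for each ν with 1 ≤ ν ≤ s−2: B_ν = { [x_{ν+1,s−1}^𝐢 , x_ν]^(x_{1,ν}^𝐢) : 0 ≤ i_ν ≤ k−2 and (i_{ν+1},…,i_{s−1}) ≠ (0,…,0) } and B'_ν = { ( x_ν^k · [x_ν^{−1}, x_{ν+1,s−1}^𝐢] )^(x_{1,ν−1}^𝐢) }. The cardinalities are #A = k^{s−2}, #B_ν = (k−1)·k^{ν−1}·(k^{s−1−ν} − 1), #B'_ν = k^{s−2}. -/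
/-!
This is the Reidemeister–Schreier method for `R = ker φ` with the Schreier transversal
`t_a = x₁^{a₁} ⋯ x_{s-1}^{a_{s-1}}`, `0 ≤ a_j < k`. Sending `x_j ↦ ((1, j), φ x_j)` into
`F(H × ι) ⋊ H` rewrites a word `w ∈ ker φ` (left component) as a word in letters `(a, j)`, each
standing for the Schreier generator `t_a x_j t_{a φ(x_j)}⁻¹`. Substituting generators for
letters and rewriting back are inverse to each other once every generator is the value of a
letter and the letters read off transversal words are trivial.

For this transversal the Schreier generator at `(a, j)` is `[x_{j+1,s-1}^a, x_j]^(x_{1,j}^a)`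
when `a_j < k - 1` and `(x_j^k [x_j⁻¹, x_{j+1,s-1}^a])^(x_{1,j-1}^a)` when `a_j = k - 1`. So it
is trivial if moreover all later digits vanish, and otherwise it lies in `B_j`, in `B'_j`, or
(for `j = s - 1`, where the commutator disappears) in `A`; every listed generator occurs.
-/

namespace GenFermat

open scoped commutatorElement

/-- The free group `F_{s-1}` on `s-1` generators `x₁, …, x_{s-1}`
(indexed in Lean by `Fin (s-1)`, so that the mathematical generator `x_m` is
`FreeGroup.of ⟨m-1, _⟩`). -/
abbrev FG (s : ℕ) : Type := FreeGroup (Fin (s - 1))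

/-- The generator `x_{t+1}` (Lean index `t : ℕ`, `t < s-1`); junk value `1` otherwise. -/
def x (s : ℕ) (t : ℕ) : FG s := if h : t < s - 1 then FreeGroup.of ⟨t, h⟩ else 1

/-- The group `(ℤ/kℤ)^{s-1}`, written multiplicatively. -/
abbrev HG (s k : ℕ) : Type := Multiplicative (Fin (s - 1) → ZMod k)

/-- The homomorphism `φ : F_{s-1} → (ℤ/kℤ)^{s-1}` sending `x_j` to the `j`-th standard
generator. -/
def phi (s k : ℕ) : FG s →* HG s k :=
  FreeGroup.lift fun j => Multiplicative.ofAdd (Pi.single j 1)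

/-- `R_{k,s-1} = ker φ`, the fundamental group of the open generalized Fermat curve of
type `(k, s-1)`. -/
abbrev R (s k : ℕ) : Subgroup (FG s) := (phi s k).ker

theorem pow_k_mem (s k : ℕ) (g : FG s) : g ^ k ∈ R s k := by
  rw [MonoidHom.mem_ker, map_pow]
  have h : k • Multiplicative.toAdd (phi s k g) = 0 := by
    funext t
    simp [ZMod.natCast_self]
  calc (phi s k g) ^ k
      = Multiplicative.ofAdd (k • Multiplicative.toAdd (phi s k g)) := by
        rw [ofAdd_nsmul, ofAdd_toAdd]
    _ = 1 := by rw [h]; rfl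

theorem commutator_mem (s k : ℕ) (g h : FG s) : ⁅g, h⁆ ∈ R s k := by
  rw [MonoidHom.mem_ker, map_commutatorElement, commutatorElement_eq_one_iff_commute]
  exact Commute.all _ _

theorem conj_mem (s k : ℕ) (g w : FG s) (hw : w ∈ R s k) : g * w * g⁻¹ ∈ R s k :=
  Subgroup.Normal.conj_mem inferInstance w hw g

/-- The ordered product `x_{lo+1}^{e(lo)} x_{lo+2}^{e(lo+1)} ⋯ x_{hi}^{e(hi-1)}`
(Lean indices in `[lo, hi)`); for a multi-index `𝐢` this realizes the element
`x_{ℓ₁,ℓ₂}^𝐢 = x_{ℓ₁}^{i_{ℓ₁}} ⋯ x_{ℓ₂}^{i_{ℓ₂}}` with `lo = ℓ₁ - 1`, `hi = ℓ₂`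
(and equals `1` when `ℓ₁ > ℓ₂`). -/
def segN (s : ℕ) (e : ℕ → ℕ) (lo hi : ℕ) : FG s :=
  ((List.range' lo (hi - lo)).map fun t => x s t ^ e t).prod

/-- The exponent function of a multi-index `𝐢 : Fin (s-1) → Fin k`. -/
def eI (s k : ℕ) (I : Fin (s - 1) → Fin k) : ℕ → ℕ :=
  fun t => if h : t < s - 1 then (I ⟨t, h⟩ : ℕ) else 0

/-- The abelianization `R^{ab} = R_{k,s-1}/R_{k,s-1}'`. -/
abbrev Ab (s k : ℕ) : Type := Abelianization ↥(R s k)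

/-- The class `[w] ∈ R^{ab}` of an element `w ∈ R_{k,s-1}`. -/
def cls (s k : ℕ) (w : FG s) (hw : w ∈ R s k) : Ab s k := Abelianization.of ⟨w, hw⟩

/-- The class `[g w g⁻¹] ∈ R^{ab}`; for `h = φ(g) ∈ H` this is the value `h·[w]` of the
conjugation action of `H = (ℤ/kℤ)^{s-1}` on `R^{ab}`. -/
def conjCl (s k : ℕ) (g w : FG s) (hw : w ∈ R s k) : Ab s k :=
  cls s k (g * w * g⁻¹) (conj_mem s k g w hw)

/-- The inclusion `Fin (s-2) → Fin (s-1)`. -/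
def cast2 (s : ℕ) : Fin (s - 2) → Fin (s - 1) :=
  Fin.castLE (Nat.sub_le_sub_left one_le_two s)

/-- Index set of the family `A`: multi-indices `(i₁,…,i_{s-2})` (all in `[0,k-1]`). -/
abbrev idxA (s k : ℕ) : Type := Fin (s - 2) → Fin k

/-- Index set of the family `B_ν` (Lean `ν : Fin (s-2)` is the mathematical `ν+1`):
multi-indices `𝐢` with `0 ≤ i_ν ≤ k-2` and `(i_{ν+1},…,i_{s-1}) ≠ (0,…,0)`. -/
abbrev idxB (s k : ℕ) (ν : Fin (s - 2)) : Type :=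
  {I : Fin (s - 1) → Fin k //
    (I (cast2 s ν) : ℕ) ≤ k - 2 ∧ ∃ t : Fin (s - 1), (ν : ℕ) < (t : ℕ) ∧ (I t : ℕ) ≠ 0}

/-- Index set of the family `B'_ν`: multi-indices `𝐢`, on which the element does not
depend on the coordinate `i_ν` (normalized here to `0`). -/
abbrev idxB' (s k : ℕ) (ν : Fin (s - 2)) : Type :=
  {I : Fin (s - 1) → Fin k // (I (cast2 s ν) : ℕ) = 0}

/-- The total index set `A ⊔ (⨆_ν B_ν ⊔ B'_ν)`. -/
abbrev genIdx (s k : ℕ) : Type :=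
  idxA s k ⊕ (Σ ν : Fin (s - 2), idxB s k ν ⊕ idxB' s k ν)

/-- The exponent function of `(i₁,…,i_{s-2})`. -/
def eA (s k : ℕ) (J : Fin (s - 2) → Fin k) : ℕ → ℕ :=
  fun t => if h : t < s - 2 then (J ⟨t, h⟩ : ℕ) else 0

/-- The generators of `R_{k,s-1}`:
`A = {(x_{s-1}^k)^(x₁^{i₁}⋯x_{s-2}^{i_{s-2}})}`,
`B_ν = {[x_{ν+1,s-1}^𝐢, x_ν]^(x_{1,ν}^𝐢)}` (with `0 ≤ i_ν ≤ k-2`, tail `≠ 0`), and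
`B'_ν = {(x_ν^k·[x_ν⁻¹, x_{ν+1,s-1}^𝐢])^(x_{1,ν-1}^𝐢)}`, where `x^y = y x y⁻¹` and
`[x,y] = x y x⁻¹ y⁻¹`.  (Lean index `ν : Fin (s-2)` is the mathematical index `ν+1`,
and Lean segment bounds are shifted by one: `x_{ℓ₁,ℓ₂}^𝐢 = segN _ _ (ℓ₁-1) ℓ₂`.) -/
def gens (s k : ℕ) : genIdx s k → FG s
  | Sum.inl J =>
      segN s (eA s k J) 0 (s - 2) * (x s (s - 2)) ^ k * (segN s (eA s k J) 0 (s - 2))⁻¹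
  | Sum.inr ⟨ν, Sum.inl ⟨I, _⟩⟩ =>
      segN s (eI s k I) 0 ((ν : ℕ) + 1) *
        ⁅segN s (eI s k I) ((ν : ℕ) + 1) (s - 1), x s (ν : ℕ)⁆ *
        (segN s (eI s k I) 0 ((ν : ℕ) + 1))⁻¹
  | Sum.inr ⟨ν, Sum.inr ⟨I, _⟩⟩ =>
      segN s (eI s k I) 0 (ν : ℕ) *
        ((x s (ν : ℕ)) ^ k * ⁅(x s (ν : ℕ))⁻¹, segN s (eI s k I) ((ν : ℕ) + 1) (s - 1)⁆) *
        (segN s (eI s k I) 0 (ν : ℕ))⁻¹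

end GenFermat

namespace ZMod

variable {k : ℕ} [NeZero k]

theorem val_add_one_of_val_ne {c : ZMod k} (h : c.val ≠ k - 1) : (c + 1).val = c.val + 1 := by
  have hc := c.val_lt
  rw [show c + 1 = ((c.val + 1 : ℕ) : ZMod k) by push_cast [ZMod.natCast_zmod_val]; rfl]
  exact ZMod.val_cast_of_lt (by omega)

theorem add_one_eq_zero_of_val_eq {c : ZMod k} (h : c.val = k - 1) : c + 1 = 0 := by
  have hk : ((k - 1 : ℕ) : ZMod k) + 1 = 0 := by
    rw [← Nat.cast_add_one, Nat.sub_add_cancel NeZero.one_le, ZMod.natCast_self]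
  rwa [← h, ZMod.natCast_zmod_val] at hk

end ZMod

theorem Nat.card_subtype_and_add_card_subtype_and_not {α : Type*} [Finite α] (P Q : α → Prop) :
    Nat.card {x // P x ∧ Q x} + Nat.card {x // P x ∧ ¬Q x} = Nat.card {x // P x} := by
  classical
  rw [← Nat.card_sum]
  exact Nat.card_congr ((Equiv.sumCongr (Equiv.subtypeSubtypeEquivSubtypeInter P Q).symm
    (Equiv.subtypeSubtypeEquivSubtypeInter P (¬Q ·)).symm).trans (Equiv.sumCompl _))

theorem Nat.card_subtype_forall_apply {α β : Type*} [Fintype α] (p : α → β → Prop) :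
    Nat.card {f : α → β // ∀ a, p a (f a)} = ∏ a, Nat.card {b // p a b} := by
  rw [Nat.card_congr Equiv.subtypePiEquivPi, Nat.card_pi]

theorem Nat.card_subtype_apply {α β : Type*} [Fintype α] (i : α) (q : β → Prop) :
    Nat.card {f : α → β // q (f i)} = ∏ a, Nat.card {b // a = i → q b} := by
  rw [← Nat.card_subtype_forall_apply]
  exact Nat.card_congr (Equiv.subtypeEquivRight fun f => ⟨fun h a ha => ha ▸ h, fun h => h i rfl⟩)

theorem Fin.card_subtype_val_le {k : ℕ} (m : ℕ) :
    Nat.card {c : Fin k // (c : ℕ) ≤ m} = min k (m + 1) := by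
  rw [Nat.card_eq_fintype_card, Fintype.card_subtype, ← Fin.card_filter_val_lt]
  simp only [Nat.lt_succ_iff]

theorem Fin.prod_eq_pow_mul_mul_pow {M : Type*} [CommMonoid M] {n ν : ℕ} (hν : ν < n)
    {f : Fin n → M} {A B C : M} (hA : ∀ t : Fin n, (t : ℕ) < ν → f t = A)
    (hB : ∀ t : Fin n, (t : ℕ) = ν → f t = B) (hC : ∀ t : Fin n, ν < t → f t = C) :
    ∏ t, f t = A ^ ν * B * C ^ (n - 1 - ν) := by
  set g : ℕ → M := fun t => if t < ν then A else if t = ν then B else C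
  have hfg : ∏ t, f t = ∏ t : Fin n, g t := Finset.prod_congr rfl fun t _ => by
    rcases lt_trichotomy (t : ℕ) ν with h | h | h
    · simp [g, h, hA t h]
    · simp [g, h, hB t h]
    · simp [g, Nat.not_lt.mpr h.le, h.ne', hC t h]
  have hA' : ∏ t ∈ Finset.range ν, g t = A ^ ν := by
    rw [Finset.prod_congr rfl fun t ht => if_pos (Finset.mem_range.mp ht), Finset.prod_const,
      Finset.card_range]
  have hC' : ∏ t ∈ Finset.Ico (ν + 1) n, g t = C ^ (n - 1 - ν) := by
    rw [Finset.prod_congr rfl fun t ht => ?_, Finset.prod_const, Nat.card_Ico]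
    · congr 1
      omega
    · simp only [Finset.mem_Ico] at ht
      simp [g, show ¬ t < ν by omega, show t ≠ ν by omega]
  rw [hfg, Fin.prod_univ_eq_prod_range g, ← Finset.prod_range_mul_prod_Ico _ hν.le,
    Finset.prod_eq_prod_Ico_succ_bot hν, hA', hC', ← mul_assoc]
  simp [g]

namespace ReidemeisterSchreier

variable {ι H : Type*} [Group H]

def shift : H →* MulAut (FreeGroup (H × ι)) where
  toFun h := FreeGroup.freeGroupCongr ((Equiv.mulLeft h).prodCongr (Equiv.refl ι))
  map_one' := MulEquiv.toMonoidHom_injective <| FreeGroup.ext_hom _ _ fun p => by simp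
  map_mul' g h := MulEquiv.toMonoidHom_injective <| FreeGroup.ext_hom _ _ fun p => by
    simp [Prod.map, mul_assoc]

@[simp]
theorem shift_of (h : H) (p : H × ι) : shift h (.of p) = .of (h * p.1, p.2) := by
  simp [shift, Prod.map]

variable (φ : FreeGroup ι →* H)

def toSemidirect : FreeGroup ι →* FreeGroup (H × ι) ⋊[shift] H :=
  FreeGroup.lift fun j => ⟨.of (1, j), φ (.of j)⟩

@[simp]
theorem toSemidirect_right (w : FreeGroup ι) : (toSemidirect φ w).right = φ w := by
  have : SemidirectProduct.rightHom.comp (toSemidirect φ) = φ :=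
    FreeGroup.ext_hom _ _ fun j => by simp [toSemidirect]
  exact DFunLike.congr_fun this w

@[simp]
theorem toSemidirect_of_left (j : ι) : (toSemidirect φ (.of j)).left = .of (1, j) := by
  simp [toSemidirect]

theorem toSemidirect_mul_left (u v : FreeGroup ι) :
    (toSemidirect φ (u * v)).left =
      (toSemidirect φ u).left * shift (φ u) (toSemidirect φ v).left := by
  rw [map_mul, SemidirectProduct.mul_left, toSemidirect_right]

theorem toSemidirect_inv_left (u : FreeGroup ι) :
    (toSemidirect φ u⁻¹).left = (shift (φ u)⁻¹ (toSemidirect φ u).left)⁻¹ := by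
  rw [map_inv, SemidirectProduct.inv_left, toSemidirect_right, map_inv]

theorem shift_shift (a b : H) (y : FreeGroup (H × ι)) : shift a (shift b y) = shift (a * b) y := by
  rw [map_mul, MulAut.mul_apply]

theorem map_shift_toSemidirect_pow_left {M : Type*} [Monoid M] (β : FreeGroup (H × ι) →* M)
    (a : H) (j : ι) (n : ℕ) (h : ∀ i < n, β (.of (a * φ (.of j) ^ i, j)) = 1) :
    β (shift a (toSemidirect φ (.of j ^ n)).left) = 1 := by
  induction n with
  | zero => simp
  | succ n ih =>
    rw [pow_succ, toSemidirect_mul_left, map_mul, shift_shift, toSemidirect_of_left, shift_of,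
      map_mul, ih fun i hi => h i (by omega), map_pow, mul_one, h n (by omega), mul_one]

def schreierGen (t : H → FreeGroup ι) (p : H × ι) : FreeGroup ι :=
  t p.1 * .of p.2 * (t (p.1 * φ (.of p.2)))⁻¹

theorem lift_schreierGen_shift (t : H → FreeGroup ι) (a : H) (w : FreeGroup ι) :
    FreeGroup.lift (schreierGen φ t) (shift a (toSemidirect φ w).left) =
      t a * w * (t (a * φ w))⁻¹ := by
  induction w using FreeGroup.induction_on generalizing a with
  | C1 => simp
  | of j => simp [schreierGen]
  | inv_of j _ =>
    rw [toSemidirect_inv_left, toSemidirect_of_left, shift_of, map_inv, shift_of, map_inv,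
      FreeGroup.lift_apply_of, schreierGen]
    simp [mul_assoc]
  | mul u v ihu ihv =>
    rw [toSemidirect_mul_left, map_mul, map_mul, shift_shift, ihu, ihv]
    simp [mul_assoc]

theorem lift_schreierGen_toSemidirect_left {t : H → FreeGroup ι} (ht : t 1 = 1)
    {w : FreeGroup ι} (hw : w ∈ φ.ker) :
    FreeGroup.lift (schreierGen φ t) (toSemidirect φ w).left = w := by
  simpa [MonoidHom.mem_ker.mp hw, ht] using lift_schreierGen_shift φ t 1 w

theorem toSemidirect_schreierGen_left {t : H → FreeGroup ι} (ht : ∀ a, φ (t a) = a)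
    (p : H × ι) :
    (toSemidirect φ (schreierGen φ t p)).left =
      (toSemidirect φ (t p.1)).left * .of p *
        (toSemidirect φ (t (p.1 * φ (.of p.2)))).left⁻¹ := by
  rw [schreierGen, toSemidirect_mul_left, toSemidirect_mul_left, toSemidirect_inv_left,
    map_mul, ht, ht, toSemidirect_of_left, shift_of, mul_one, map_inv, shift_shift,
    mul_inv_cancel, map_one, MulAut.one_apply]

theorem schreierGen_mem_ker {t : H → FreeGroup ι} (ht : ∀ a, φ (t a) = a) (p : H × ι) :
    schreierGen φ t p ∈ φ.ker := by
  simp [schreierGen, ht]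

def kerLeft : φ.ker →* FreeGroup (H × ι) where
  toFun w := (toSemidirect φ w).left
  map_one' := by simp
  map_mul' u v := by
    rw [Subgroup.coe_mul, toSemidirect_mul_left, MonoidHom.mem_ker.mp u.2, map_one,
      MulAut.one_apply]

theorem lift_injective_and_range_eq_ker {G : Type*} (gen : G → FreeGroup ι)
    {t : H → FreeGroup ι} (ht1 : t 1 = 1) (ht : ∀ a, φ (t a) = a)
    (β : FreeGroup (H × ι) →* FreeGroup G)
    (hβ : ∀ p, FreeGroup.lift gen (β (.of p)) = schreierGen φ t p)
    (hβt : ∀ a, β (toSemidirect φ (t a)).left = 1)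
    (hgen : ∀ g, ∃ p, β (.of p) = .of g) :
    Function.Injective (FreeGroup.lift gen) ∧ (FreeGroup.lift gen).range = φ.ker := by
  have hgen' (g : G) : ∃ p, β (.of p) = .of g ∧ schreierGen φ t p = gen g := by
    obtain ⟨p, hp⟩ := hgen g
    exact ⟨p, hp, by rw [← hβ, hp, FreeGroup.lift_apply_of]⟩
  have hrange : (FreeGroup.lift gen).range ≤ φ.ker := by
    rw [FreeGroup.range_lift_eq_closure, Subgroup.closure_le]
    rintro _ ⟨g, rfl⟩
    obtain ⟨p, -, hp⟩ := hgen' g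
    exact hp ▸ schreierGen_mem_ker φ ht p
  have hretract : β.comp ((kerLeft φ).comp ((FreeGroup.lift gen).codRestrict φ.ker
      fun z => hrange ⟨z, rfl⟩)) = MonoidHom.id _ := by
    refine FreeGroup.ext_hom _ _ fun g => ?_
    obtain ⟨p, hβp, hp⟩ := hgen' g
    change β (toSemidirect φ (FreeGroup.lift gen (.of g))).left = .of g
    rw [FreeGroup.lift_apply_of, ← hp, toSemidirect_schreierGen_left φ ht, map_mul, map_mul,
      map_inv, hβt, hβt, hβp, one_mul, inv_one, mul_one]
  have hleft (z : FreeGroup G) : β (toSemidirect φ (FreeGroup.lift gen z)).left = z :=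
    DFunLike.congr_fun hretract z
  have hcomp : (FreeGroup.lift gen).comp β = FreeGroup.lift (schreierGen φ t) :=
    FreeGroup.ext_hom _ _ fun p => by rw [MonoidHom.comp_apply, hβ, FreeGroup.lift_apply_of]
  refine ⟨fun z z' h => by rw [← hleft z, ← hleft z', h],
    le_antisymm hrange fun w hw => ⟨β (toSemidirect φ w).left, ?_⟩⟩
  rw [← MonoidHom.comp_apply, hcomp, lift_schreierGen_toSemidirect_left φ ht1 hw]

end ReidemeisterSchreier

namespace GenFermat

open scoped commutatorElement

section Segments

variable {s : ℕ}

theorem x_eq_of (j : Fin (s - 1)) : x s j = FreeGroup.of j := dif_pos j.2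

@[simp]
theorem val_cast2 (ν : Fin (s - 2)) : (cast2 s ν : ℕ) = ν := rfl

theorem segN_eq_one_of_le (e : ℕ → ℕ) {lo hi : ℕ} (h : hi ≤ lo) : segN s e lo hi = 1 := by
  simp [segN, Nat.sub_eq_zero_of_le h]

theorem segN_succ (e : ℕ → ℕ) {lo hi : ℕ} (h : lo ≤ hi) :
    segN s e lo (hi + 1) = segN s e lo hi * x s hi ^ e hi := by
  rw [segN, show hi + 1 - lo = hi - lo + 1 by omega, List.range'_concat,
    show lo + 1 * (hi - lo) = hi by omega, List.map_append, List.prod_append]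
  simp [segN]

theorem segN_mul_segN (e : ℕ → ℕ) {lo mid hi : ℕ} (h₁ : lo ≤ mid) (h₂ : mid ≤ hi) :
    segN s e lo mid * segN s e mid hi = segN s e lo hi := by
  have h := List.range'_append_1 (s := lo) (m := mid - lo) (n := hi - mid)
  rw [show lo + (mid - lo) = mid by omega, show mid - lo + (hi - mid) = hi - lo by omega] at h
  rw [segN, segN, segN, ← List.prod_append, ← List.map_append, h]

theorem segN_eq_mul_pow_mul (e : ℕ → ℕ) {lo m hi : ℕ} (h₁ : lo ≤ m) (h₂ : m < hi) :
    segN s e lo hi = segN s e lo m * x s m ^ e m * segN s e (m + 1) hi := by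
  rw [← segN_succ e h₁, segN_mul_segN e (by omega) h₂]

theorem segN_congr {e e' : ℕ → ℕ} {lo hi : ℕ} (h : ∀ m, lo ≤ m → m < hi → e m = e' m) :
    segN s e lo hi = segN s e' lo hi := by
  refine congr_arg List.prod (List.map_congr_left fun m hm => ?_)
  rw [List.mem_range'_1] at hm
  rw [h m hm.1 (by omega)]

theorem segN_eq_one {e : ℕ → ℕ} {lo hi : ℕ} (h : ∀ m, lo ≤ m → m < hi → e m = 0) :
    segN s e lo hi = 1 := by
  rw [segN_congr h]
  simp [segN]

end Segments

section Phi

variable {s k : ℕ}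

theorem phi_of (j : Fin (s - 1)) :
    phi s k (FreeGroup.of j) = Multiplicative.ofAdd (Pi.single j 1) :=
  FreeGroup.lift_apply_of

theorem phi_x_pow (j : Fin (s - 1)) (n : ℕ) :
    phi s k (x s j ^ n) = Multiplicative.ofAdd (Pi.single j (n : ZMod k)) := by
  rw [x_eq_of, map_pow, phi_of, ← ofAdd_nsmul, ← Pi.single_smul, nsmul_eq_mul, mul_one]

theorem phi_segN (e : ℕ → ℕ) {m : ℕ} (hm : m ≤ s - 1) :
    phi s k (segN s e 0 m) =
      Multiplicative.ofAdd fun t : Fin (s - 1) => if (t : ℕ) < m then (e t : ZMod k) else 0 := by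
  induction m with
  | zero => rw [segN_eq_one_of_le e le_rfl, map_one]; rfl
  | succ m ih =>
    rw [segN_succ e m.zero_le, map_mul, ih (by omega), show m = ((⟨m, by omega⟩ : Fin (s - 1)) : ℕ)
      from rfl, phi_x_pow, ← ofAdd_add]
    congr 1
    funext t
    simp only [Pi.add_apply, Pi.single_apply, Fin.ext_iff]
    split_ifs <;> first | omega | simp_all

end Phi

section Transversal

variable {s k : ℕ}

theorem eI_apply (I : Fin (s - 1) → Fin k) (t : Fin (s - 1)) : eI s k I t = I t := dif_pos t.2

theorem segN_eI_congr {I I' : Fin (s - 1) → Fin k} {lo hi : ℕ}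
    (h : ∀ t : Fin (s - 1), lo ≤ t → (t : ℕ) < hi → I t = I' t) :
    segN s (eI s k I) lo hi = segN s (eI s k I') lo hi := by
  refine segN_congr fun m h₁ h₂ => ?_
  by_cases hm : m < s - 1
  · simp [eI, hm, h ⟨m, hm⟩ h₁ h₂]
  · simp [eI, hm]

theorem segN_eI_congr_of_ne {I I' : Fin (s - 1) → Fin k} (j : Fin (s - 1))
    (h : ∀ t, t ≠ j → I t = I' t) {lo hi : ℕ} (hj : hi ≤ j ∨ (j : ℕ) < lo) :
    segN s (eI s k I) lo hi = segN s (eI s k I') lo hi :=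
  segN_eI_congr fun t h₁ h₂ => h t fun e => by subst e; omega

variable [NeZero k]

def digits (a : Fin (s - 1) → ZMod k) : Fin (s - 1) → Fin k := fun t => ⟨(a t).val, (a t).val_lt⟩

def transversal (a : Fin (s - 1) → ZMod k) : FG s := segN s (eI s k (digits a)) 0 (s - 1)

theorem transversal_zero : transversal (0 : Fin (s - 1) → ZMod k) = 1 :=
  segN_eq_one fun m _ _ => by simp [eI, digits]

theorem phi_transversal (a : Fin (s - 1) → ZMod k) :
    phi s k (transversal a) = Multiplicative.ofAdd a := by
  rw [transversal, phi_segN _ le_rfl]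
  congr 1
  funext t
  simp [t.2, eI_apply, digits]

theorem transversal_eq (a : Fin (s - 1) → ZMod k) (j : Fin (s - 1)) :
    transversal a = segN s (eI s k (digits a)) 0 j * x s j ^ (a j).val *
      segN s (eI s k (digits a)) (j + 1) (s - 1) := by
  rw [transversal, segN_eq_mul_pow_mul _ (Nat.zero_le _) j.2, eI_apply]
  rfl

theorem digits_add_single_of_ne (a : Fin (s - 1) → ZMod k) {j t : Fin (s - 1)} (c : ZMod k)
    (h : t ≠ j) : digits (a + Pi.single j c) t = digits a t := by
  simp [digits, h]

theorem schreierLetter_eq (a : Fin (s - 1) → ZMod k) (j : Fin (s - 1)) :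
    transversal a * FreeGroup.of j * (transversal (a + Pi.single j 1))⁻¹ =
      segN s (eI s k (digits a)) 0 j * x s j ^ (a j).val *
        segN s (eI s k (digits a)) (j + 1) (s - 1) * x s j *
        (segN s (eI s k (digits a)) (j + 1) (s - 1))⁻¹ * (x s j ^ (a j + 1).val)⁻¹ *
        (segN s (eI s k (digits a)) 0 j)⁻¹ := by
  rw [transversal_eq a j, transversal_eq _ j,
    segN_eI_congr_of_ne j (fun _ => digits_add_single_of_ne a 1) (.inl le_rfl),
    segN_eI_congr_of_ne j (fun _ => digits_add_single_of_ne a 1) (.inr (Nat.lt_succ_self _)),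
    x_eq_of]
  simp [mul_assoc]

end Transversal

section Letters

variable {s k : ℕ} [NeZero k]

theorem schreierLetter_of_val_ne (a : Fin (s - 1) → ZMod k) (j : Fin (s - 1))
    (h : (a j).val ≠ k - 1) :
    transversal a * FreeGroup.of j * (transversal (a + Pi.single j 1))⁻¹ =
      segN s (eI s k (digits a)) 0 j * x s j ^ (a j).val *
        ⁅segN s (eI s k (digits a)) (j + 1) (s - 1), x s j⁆ *
        (segN s (eI s k (digits a)) 0 j * x s j ^ (a j).val)⁻¹ := by
  rw [schreierLetter_eq, ZMod.val_add_one_of_val_ne h, pow_succ, commutatorElement_def]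
  group

theorem schreierLetter_of_val_eq (a : Fin (s - 1) → ZMod k) (j : Fin (s - 1))
    (h : (a j).val = k - 1) :
    transversal a * FreeGroup.of j * (transversal (a + Pi.single j 1))⁻¹ =
      segN s (eI s k (digits a)) 0 j *
        (x s j ^ k * ⁅(x s j)⁻¹, segN s (eI s k (digits a)) (j + 1) (s - 1)⁆) *
        (segN s (eI s k (digits a)) 0 j)⁻¹ := by
  have hpow : x s j ^ k = x s j ^ (a j).val * x s j := by
    rw [h, ← pow_succ, Nat.sub_add_cancel NeZero.one_le]
  rw [schreierLetter_eq, ZMod.add_one_eq_zero_of_val_eq h, ZMod.val_zero, hpow,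
    commutatorElement_def]
  group

def letter (I : Fin (s - 1) → Fin k) (j : Fin (s - 1)) : FreeGroup (genIdx s k) :=
  if hj : (j : ℕ) < s - 2 then
    if hB : (I j : ℕ) ≤ k - 2 ∧ ∃ t : Fin (s - 1), (j : ℕ) < t ∧ (I t : ℕ) ≠ 0 then
      .of (.inr ⟨⟨j, hj⟩, .inl ⟨I, hB⟩⟩)
    else if (I j : ℕ) = k - 1 then
      .of (.inr ⟨⟨j, hj⟩, .inr ⟨Function.update I j 0, by simp [cast2]⟩⟩)
    else 1
  else if (I j : ℕ) = k - 1 then .of (.inl fun m => I (cast2 s m)) else 1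

theorem letter_eq_one {I : Fin (s - 1) → Fin k} {j : Fin (s - 1)} (hI : (I j : ℕ) ≠ k - 1)
    (htail : ∀ t : Fin (s - 1), (j : ℕ) < t → (I t : ℕ) = 0) : letter I j = 1 := by
  unfold letter
  split_ifs with _ hB
  · obtain ⟨t, ht, hne⟩ := hB.2
    exact absurd (htail t ht) hne
  all_goals rfl

theorem lift_gens_letter_of_val_eq (a : Fin (s - 1) → ZMod k) (j : Fin (s - 1))
    (hc : (a j).val = k - 1) :
    FreeGroup.lift (gens s k) (letter (digits a) j) =
      segN s (eI s k (digits a)) 0 j *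
        (x s j ^ k * ⁅(x s j)⁻¹, segN s (eI s k (digits a)) (j + 1) (s - 1)⁆) *
        (segN s (eI s k (digits a)) 0 j)⁻¹ := by
  have hc' : (digits a j : ℕ) = k - 1 := hc
  by_cases hj : (j : ℕ) < s - 2
  · have hB : ¬ ((digits a j : ℕ) ≤ k - 2 ∧
        ∃ t : Fin (s - 1), (j : ℕ) < t ∧ (digits a t : ℕ) ≠ 0) := fun h => by
      have := (a j).val_lt
      omega
    have hupd (t : Fin (s - 1)) (ht : t ≠ j) : Function.update (digits a) j 0 t = digits a t :=
      Function.update_of_ne ht _ _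
    rw [letter, dif_pos hj, dif_neg hB, if_pos hc', FreeGroup.lift_apply_of]
    simp only [gens]
    rw [segN_eI_congr_of_ne j hupd (.inl le_rfl),
      segN_eI_congr_of_ne j hupd (.inr (Nat.lt_succ_self _))]
  · have hj' : (j : ℕ) = s - 2 := by omega
    have hP : segN s (eA s k fun m => digits a (cast2 s m)) 0 (s - 2) =
        segN s (eI s k (digits a)) 0 j := by
      rw [hj']
      exact segN_congr fun m _ hm => by simp [eA, eI, hm, show m < s - 1 by omega, cast2]
    rw [letter, dif_neg hj, if_pos hc', FreeGroup.lift_apply_of,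
      segN_eq_one_of_le _ (show s - 1 ≤ j + 1 by omega), commutatorElement_one_right, mul_one]
    simp only [gens]
    rw [hP, hj']

theorem lift_gens_letter_of_val_ne (hk : 2 ≤ k) (a : Fin (s - 1) → ZMod k) (j : Fin (s - 1))
    (hc : (a j).val ≠ k - 1) :
    FreeGroup.lift (gens s k) (letter (digits a) j) =
      segN s (eI s k (digits a)) 0 j * x s j ^ (a j).val *
        ⁅segN s (eI s k (digits a)) (j + 1) (s - 1), x s j⁆ *
        (segN s (eI s k (digits a)) 0 j * x s j ^ (a j).val)⁻¹ := by
  have hB : (digits a j : ℕ) ≤ k - 2 := by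
    have := (a j).val_lt
    simp only [digits]
    omega
  by_cases htail : ∃ t : Fin (s - 1), (j : ℕ) < t ∧ (digits a t : ℕ) ≠ 0
  · have hj : (j : ℕ) < s - 2 := by
      obtain ⟨t, ht, -⟩ := htail
      omega
    rw [letter, dif_pos hj, dif_pos ⟨hB, htail⟩, FreeGroup.lift_apply_of]
    simp only [gens]
    rw [segN_succ _ (Nat.zero_le _), eI_apply]
    rfl
  · push Not at htail
    rw [letter_eq_one hc htail, map_one, segN_eq_one (lo := j + 1) fun m hm₁ hm₂ => ?_,
      commutatorElement_one_left, mul_one, mul_inv_cancel]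
    simp [eI, hm₂, htail ⟨m, hm₂⟩ hm₁]

theorem lift_gens_letter (hk : 2 ≤ k) (a : Fin (s - 1) → ZMod k) (j : Fin (s - 1)) :
    FreeGroup.lift (gens s k) (letter (digits a) j) =
      transversal a * FreeGroup.of j * (transversal (a + Pi.single j 1))⁻¹ := by
  by_cases hc : (a j).val = k - 1
  · rw [schreierLetter_of_val_eq a j hc, lift_gens_letter_of_val_eq a j hc]
  · rw [schreierLetter_of_val_ne a j hc, lift_gens_letter_of_val_ne hk a j hc]

theorem exists_letter_eq_of (hs : 2 ≤ s) (g : genIdx s k) :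
    ∃ I j, letter I j = FreeGroup.of g := by
  have hk : k - 1 < k := Nat.sub_one_lt (NeZero.ne k)
  rcases g with J | ⟨ν, ⟨I, hI⟩ | ⟨I, hI⟩⟩
  · refine ⟨fun t => if h : (t : ℕ) < s - 2 then J ⟨t, h⟩ else ⟨k - 1, hk⟩, ⟨s - 2, by omega⟩, ?_⟩
    rw [letter, dif_neg (lt_irrefl _), if_pos (by simp)]
    congr
    funext m
    simp [cast2, m.2]
  · refine ⟨I, cast2 s ν, ?_⟩
    rw [letter, dif_pos (show (cast2 s ν : ℕ) < s - 2 from ν.2),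
      dif_pos (show _ ∧ ∃ t : Fin (s - 1), (cast2 s ν : ℕ) < t ∧ _ from hI)]
    rfl
  · refine ⟨Function.update I (cast2 s ν) ⟨k - 1, hk⟩, cast2 s ν, ?_⟩
    have hB : ¬ ((Function.update I (cast2 s ν) ⟨k - 1, hk⟩ (cast2 s ν) : ℕ) ≤ k - 2 ∧
        ∃ t : Fin (s - 1), (cast2 s ν : ℕ) < t ∧
          (Function.update I (cast2 s ν) ⟨k - 1, hk⟩ t : ℕ) ≠ 0) := by
      simp only [Function.update_self]; omega
    have hupd : Function.update I (cast2 s ν) 0 = I :=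
      Function.update_eq_self_iff.mpr (Fin.ext hI.symm)
    rw [letter, dif_pos (show (cast2 s ν : ℕ) < s - 2 from ν.2), dif_neg hB, if_pos (by simp)]
    simp only [Function.update_idem, hupd]
    rfl

def letterHom : FreeGroup (HG s k × Fin (s - 1)) →* FreeGroup (genIdx s k) :=
  FreeGroup.lift fun p => letter (digits (Multiplicative.toAdd p.1)) p.2

-- The letters read off `x_{1,m}^a` are `((a₁, …, a_{j-1}, i, 0, …, 0), j)` with `j ≤ m`, `i < a_j`.
theorem letterHom_toSemidirect_segN_left (a : Fin (s - 1) → ZMod k) {m : ℕ} (hm : m ≤ s - 1) :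
    letterHom (ReidemeisterSchreier.toSemidirect (phi s k)
      (segN s (eI s k (digits a)) 0 m)).left = 1 := by
  induction m with
  | zero => rw [segN_eq_one_of_le _ le_rfl, map_one, SemidirectProduct.one_left, map_one]
  | succ m ih =>
    set j : Fin (s - 1) := ⟨m, by omega⟩
    rw [segN_succ _ m.zero_le, show x s m = .of j from x_eq_of j,
      ReidemeisterSchreier.toSemidirect_mul_left, map_mul, ih (by omega), one_mul]
    refine ReidemeisterSchreier.map_shift_toSemidirect_pow_left _ _ _ _ _ fun i hi => ?_
    rw [show eI s k (digits a) m = (a j).val from eI_apply (digits a) j] at hi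
    have hik : i < k := hi.trans (a j).val_lt
    have hletter (t : Fin (s - 1)) (ht : m ≤ t) :
        Multiplicative.toAdd (phi s k (segN s (eI s k (digits a)) 0 m) * phi s k (.of j) ^ i) t =
          if t = j then (i : ZMod k) else 0 := by
      rw [← map_pow, ← x_eq_of, phi_x_pow]
      simp [phi_segN _ (show m ≤ s - 1 by omega), Pi.single_apply, Nat.not_lt.mpr ht]
    rw [letterHom, FreeGroup.lift_apply_of]
    refine letter_eq_one ?_ fun t ht => ?_
    · have := (a j).val_lt
      simp only [digits, hletter j le_rfl, if_true, ZMod.val_cast_of_lt hik]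
      omega
    · simp [digits, hletter t ht.le, (Fin.ne_of_gt ht)]

theorem lift_gens_letterHom (hk : 2 ≤ k) (p : HG s k × Fin (s - 1)) :
    FreeGroup.lift (gens s k) (letterHom (.of p)) =
      ReidemeisterSchreier.schreierGen (phi s k) (transversal ∘ Multiplicative.toAdd) p := by
  rw [letterHom, FreeGroup.lift_apply_of, lift_gens_letter hk, ReidemeisterSchreier.schreierGen,
    phi_of]
  rfl

theorem digits_natCast (I : Fin (s - 1) → Fin k) : digits (fun t => ((I t : ℕ) : ZMod k)) = I :=
  funext fun t => Fin.ext (ZMod.val_cast_of_lt (I t).2)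

theorem exists_letterHom_eq_of (hs : 2 ≤ s) (g : genIdx s k) :
    ∃ p, letterHom (.of p) = FreeGroup.of g := by
  obtain ⟨I, j, h⟩ := exists_letter_eq_of hs g
  refine ⟨(Multiplicative.ofAdd fun t => ((I t : ℕ) : ZMod k), j), ?_⟩
  rw [letterHom, FreeGroup.lift_apply_of, ← h]
  exact congr_arg (letter · j) (digits_natCast I)

end Letters

section Counting

variable {s k : ℕ}

theorem card_idxA : Nat.card (idxA s k) = k ^ (s - 2) := by
  simp

theorem card_idxB' [NeZero k] (ν : Fin (s - 2)) : Nat.card (idxB' s k ν) = k ^ (s - 2) := by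
  rw [Nat.card_subtype_apply (cast2 s ν) fun c : Fin k => (c : ℕ) = 0,
    Fin.prod_eq_pow_mul_mul_pow (A := k) (B := 1) (C := k) (ν := ν) (by omega)
      (fun t h => by simp [Fin.ne_of_val_ne (show (t : ℕ) ≠ cast2 s ν by simp; omega)])
      (fun t h => by simp [Fin.ext (show (t : ℕ) = cast2 s ν by simp [h]), Fin.val_eq_zero_iff])
      (fun t h => by simp [Fin.ne_of_val_ne (show (t : ℕ) ≠ cast2 s ν by simp; omega)])]
  rw [mul_one, ← pow_add]
  congr 1
  omega

theorem card_apply_cast2_le (hk : 2 ≤ k) (ν : Fin (s - 2)) :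
    Nat.card {I : Fin (s - 1) → Fin k // (I (cast2 s ν) : ℕ) ≤ k - 2} =
      k ^ (ν : ℕ) * (k - 1) * k ^ (s - 2 - ν) := by
  rw [Nat.card_subtype_apply (cast2 s ν) fun c : Fin k => (c : ℕ) ≤ k - 2,
    Fin.prod_eq_pow_mul_mul_pow (A := k) (B := k - 1) (C := k) (ν := ν) (by omega)
      (fun t h => by simp [Fin.ne_of_val_ne (show (t : ℕ) ≠ cast2 s ν by simp; omega)])
      (fun t h => by
        obtain rfl : t = cast2 s ν := Fin.ext (by simp [h])
        simp only [true_implies, Fin.card_subtype_val_le]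
        omega)
      (fun t h => by simp [Fin.ne_of_val_ne (show (t : ℕ) ≠ cast2 s ν by simp; omega)]),
    show s - 1 - 1 - ν = s - 2 - ν by omega]

theorem card_apply_cast2_le_and_tail_eq_zero (hk : 2 ≤ k) (ν : Fin (s - 2)) :
    Nat.card {I : Fin (s - 1) → Fin k // (I (cast2 s ν) : ℕ) ≤ k - 2 ∧
      ¬ ∃ t : Fin (s - 1), (ν : ℕ) < t ∧ (I t : ℕ) ≠ 0} = k ^ (ν : ℕ) * (k - 1) := by
  have : NeZero k := ⟨by omega⟩
  have e : {I : Fin (s - 1) → Fin k // (I (cast2 s ν) : ℕ) ≤ k - 2 ∧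
      ¬ ∃ t : Fin (s - 1), (ν : ℕ) < t ∧ (I t : ℕ) ≠ 0} ≃
      {I : Fin (s - 1) → Fin k //
        ∀ t, (t = cast2 s ν → (I t : ℕ) ≤ k - 2) ∧ ((ν : ℕ) < t → (I t : ℕ) = 0)} :=
    Equiv.subtypeEquivRight fun I =>
      ⟨fun ⟨h₁, h₂⟩ t => ⟨fun ht => ht ▸ h₁, fun hlt => not_not.mp fun hne => h₂ ⟨t, hlt, hne⟩⟩,
        fun h => ⟨(h _).1 rfl, fun ⟨t, hlt, hne⟩ => hne ((h t).2 hlt)⟩⟩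
  rw [Nat.card_congr e, Nat.card_subtype_forall_apply fun t (c : Fin k) =>
      (t = cast2 s ν → (c : ℕ) ≤ k - 2) ∧ ((ν : ℕ) < t → (c : ℕ) = 0),
    Fin.prod_eq_pow_mul_mul_pow (A := k) (B := k - 1) (C := 1) (ν := ν) (by omega)
      (fun t h => by
        simp [Fin.ne_of_val_ne (show (t : ℕ) ≠ cast2 s ν by simp; omega), Nat.not_lt.mpr h.le])
      (fun t h => by
        obtain rfl : t = cast2 s ν := Fin.ext (by simp [h])
        simp only [true_implies, val_cast2, lt_irrefl, false_implies, and_true,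
          Fin.card_subtype_val_le]
        omega)
      (fun t h => by
        simp [Fin.ne_of_val_ne (show (t : ℕ) ≠ cast2 s ν by simp; omega), h,
          Fin.val_eq_zero_iff]),
    one_pow, mul_one]

theorem card_idxB (hk : 2 ≤ k) (ν : Fin (s - 2)) :
    Nat.card (idxB s k ν) = (k - 1) * k ^ (ν : ℕ) * (k ^ (s - 2 - (ν : ℕ)) - 1) := by
  have h := Nat.card_subtype_and_add_card_subtype_and_not
    (fun I : Fin (s - 1) → Fin k => (I (cast2 s ν) : ℕ) ≤ k - 2)
    (fun I => ∃ t : Fin (s - 1), (ν : ℕ) < t ∧ (I t : ℕ) ≠ 0)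
  rw [card_apply_cast2_le hk, card_apply_cast2_le_and_tail_eq_zero hk] at h
  rw [mul_comm (k - 1), Nat.mul_sub_one]
  exact Nat.eq_sub_of_add_eq h

end Counting

/-- `R_{k,s-1}` is freely generated by `A ∪ ⋃_ν (B_ν ∪ B'_ν)`: the
homomorphism `FreeGroup (genIdx s k) → F_{s-1}` determined by the listed elements is
injective with image exactly `R_{k,s-1}`; moreover `#A = k^{s-2}`,
`#B_ν = (k-1)·k^{ν-1}·(k^{s-1-ν} - 1)` and `#B'_ν = k^{s-2}` (stated for the Lean
index `ν`, i.e. mathematical `ν+1`). -/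
theorem statement11 (s k : ℕ) (hs : 3 ≤ s) (hk : 2 ≤ k) :
    Function.Injective ⇑(FreeGroup.lift (gens s k)) ∧
    (FreeGroup.lift (gens s k)).range = R s k ∧
    Nat.card (idxA s k) = k ^ (s - 2) ∧
    (∀ ν : Fin (s - 2),
      Nat.card (idxB s k ν) = (k - 1) * k ^ (ν : ℕ) * (k ^ (s - 2 - (ν : ℕ)) - 1)) ∧
    (∀ ν : Fin (s - 2), Nat.card (idxB' s k ν) = k ^ (s - 2)) := by
  have : NeZero k := ⟨by omega⟩
  obtain ⟨hinj, hrange⟩ := ReidemeisterSchreier.lift_injective_and_range_eq_ker (phi s k)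
    (gens s k) transversal_zero (fun a => phi_transversal (Multiplicative.toAdd a)) letterHom
    (lift_gens_letterHom hk) (fun a => letterHom_toSemidirect_segN_left _ le_rfl)
    (exists_letterHom_eq_of (by omega))
  exact ⟨hinj, hrange, card_idxA, card_idxB hk, card_idxB'⟩

end GenFermat
end

section
/- For each i with 1 ≤ i ≤ s−1, the ideal Σ_i·ℤ_ℓ[H₀] equals Σ_i·ℤ_ℓ[K_i], where K_i ≤ H₀ is the subgroup generated by {x̄_j : 1 ≤ j ≤ s−1, j ≠ i}; in particular Σ_i·ℤ_ℓ[H₀] is a free ℤ_ℓ-module of rank ℓ^{k(s−2)}. Moreover Σ_s·ℤ_ℓ[H₀] equals the set of elements a ∈ ℤ_ℓ[H₀] fixed under multiplication by x̄₁x̄₂⋯x̄_{s−1}, and it is also a free ℤ_ℓ-module of rank ℓ^{k(s−2)}. -/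
namespace GenFermatGA

/-- The group `H₀ = (ℤ/ℓᵏℤ)^{s-1}`, written multiplicatively. -/
abbrev H (ℓ k s : ℕ) : Type := Multiplicative (Fin (s - 1) → ZMod (ℓ ^ k))

/-- The group algebra `ℤ_ℓ[H₀]` over the `ℓ`-adic integers. -/
abbrev A (ℓ k s : ℕ) [Fact (Nat.Prime ℓ)] : Type := MonoidAlgebra ℤ_[ℓ] (H ℓ k s)

/-- The standard generator `x̄_{t+1}` (Lean index `t : Fin (s-1)`). -/
def gen (ℓ k s : ℕ) (t : Fin (s - 1)) : H ℓ k s := Multiplicative.ofAdd (Pi.single t 1)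

/-- The product `x̄₁ x̄₂ ⋯ x̄_{s-1}`. -/
def allProd (ℓ k s : ℕ) : H ℓ k s := ∏ t : Fin (s - 1), gen ℓ k s t

/-- The elements `x̄₁, …, x̄_{s-1}` and `x̄_s = (x̄₁ x̄₂ ⋯ x̄_{s-1})⁻¹`
(Lean index `i : Fin s`, the mathematical `i+1`). -/
def xbar (ℓ k s : ℕ) (i : Fin s) : H ℓ k s :=
  if h : (i : ℕ) < s - 1 then gen ℓ k s ⟨i, h⟩ else (allProd ℓ k s)⁻¹

/-- The element `Σ_i = Σ_{ν=0}^{ℓᵏ-1} x̄_i^ν` of `ℤ_ℓ[H₀]`. -/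
noncomputable def Sig (ℓ k s : ℕ) [Fact (Nat.Prime ℓ)] (i : Fin s) : A ℓ k s :=
  ∑ ν ∈ Finset.range (ℓ ^ k), MonoidAlgebra.of ℤ_[ℓ] (H ℓ k s) (xbar ℓ k s i ^ ν)

/-- The product `x̄₁ x̄₂ ⋯ x̄_{j-1}` of the first `j` (Lean) generators
(Lean `j : Fin s` is the mathematical index `j+1`; for Lean `j = 0` this is `1`). -/
def prefixProd (ℓ k s : ℕ) (j : Fin s) : H ℓ k s :=
  ∏ t : Fin (s - 1), if (t : ℕ) < (j : ℕ) then gen ℓ k s t else 1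


/-- The subgroup `K_i ≤ H₀` generated by the `x̄_j`, `1 ≤ j ≤ s-1`, `j ≠ i`. -/
def Ksub (ℓ k s : ℕ) (i : Fin (s - 1)) : Subgroup (H ℓ k s) :=
  Subgroup.closure {g | ∃ j : Fin (s - 1), j ≠ i ∧ g = gen ℓ k s j}

end GenFermatGA

/-!
Let `g ∈ G` satisfy `g^q = 1` and let `π : G → ℤ/q` be a homomorphism with `π g = 1`, so that
`(m, h) ↦ g^m h` identifies `Fin q × ker π` with `G`. Put `Σ = ∑_{ν<q} g^ν`. Since
`(g - 1) Σ = g^q - 1 = 0`, every multiple of `Σ` is fixed by `g`; conversely the coefficients of a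
`g`-fixed `z` are constant on each coset `⟨g⟩ h`, whence `z = Σ · ∑_{h ∈ ker π} z_h h`. So the ideal
`Σ · R[G]` is the fixed module of `g`, equals `Σ · R[ker π]`, and is spanned by the `Σ h` with
`h ∈ ker π`; these are independent because `Σ h'` has coefficient `δ_{h h'}` at `h ∈ ker π`.

On `H₀` take `π` to be a coordinate function: `Σ_i` is `Σ` for `g = x̄_i`, with `K_i = ker π_i`, and
since `Σ(g⁻¹) = Σ(g)`, `Σ_s` is `Σ` for `g = x̄₁ ⋯ x̄_{s-1}`. In both cases `|ker π| = ℓ^{k(s-2)}`.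
-/

open Finset MonoidAlgebra

namespace MonoidHom

variable {G : Type*} [CommGroup G] {q : ℕ} {g : G}
  {π : G →* Multiplicative (ZMod q)}

theorem map_pow_of_eq_ofAdd_one (hπ : π g = Multiplicative.ofAdd 1) (n : ℕ) :
    π (g ^ n) = Multiplicative.ofAdd (n : ZMod q) := by
  rw [map_pow, hπ, ← ofAdd_nsmul, nsmul_one]

def powMulKerEquiv [NeZero q] (hπ : π g = Multiplicative.ofAdd 1) : Fin q × π.ker ≃ G where
  toFun p := g ^ (p.1 : ℕ) * p.2
  invFun x := (⟨(Multiplicative.toAdd (π x)).val, ZMod.val_lt _⟩,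
    ⟨(g ^ (Multiplicative.toAdd (π x)).val)⁻¹ * x, by
      simp [map_pow_of_eq_ofAdd_one hπ]⟩)
  left_inv := by
    rintro ⟨m, h, hh⟩
    have hm : (Multiplicative.toAdd (π (g ^ (m : ℕ) * h))).val = m := by
      rw [map_mul, MonoidHom.mem_ker.mp hh, mul_one, map_pow_of_eq_ofAdd_one hπ, toAdd_ofAdd,
        ZMod.val_cast_of_lt m.isLt]
    ext
    · exact hm
    · dsimp only
      rw [hm, inv_mul_cancel_left]
  right_inv x := by simp

theorem card_eq_mul_card_ker [NeZero q] (hπ : π g = Multiplicative.ofAdd 1) :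
    Nat.card G = q * Nat.card π.ker := by
  rw [← Nat.card_congr (π.powMulKerEquiv hπ), Nat.card_prod,
    Nat.card_eq_fintype_card (α := Fin q), Fintype.card_fin]

end MonoidHom

namespace MonoidAlgebra

section OrbitSum

variable (R : Type*) {G : Type*} [CommRing R] [CommGroup G]

noncomputable def orbitSum (g : G) (q : ℕ) : MonoidAlgebra R G :=
  ∑ ν ∈ range q, of R G (g ^ ν)

variable {R} {g : G} {q : ℕ}

theorem orbitSum_eq_sum_fin : orbitSum R g q = ∑ m : Fin q, of R G (g ^ (m : ℕ)) :=
  (Fin.sum_univ_eq_sum_range _ q).symm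

theorem of_mul_orbitSum (hg : g ^ q = 1) : of R G g * orbitSum R g q = orbitSum R g q := by
  have h := mul_geom_sum (of R G g) q
  simp only [← map_pow, hg, map_one, sub_self, sub_mul, one_mul, sub_eq_zero] at h
  simpa only [orbitSum, map_pow] using h

theorem orbitSum_inv (hg : g ^ q = 1) : orbitSum R g⁻¹ q = orbitSum R g q := by
  have hterm : ∀ j ∈ range q, of R G (g⁻¹ ^ j) = of R G (g ^ (q - 1 - j)) * of R G g := by
    intro j hj
    rw [← map_mul, ← pow_succ, inv_pow]
    congr 1
    rw [inv_eq_iff_mul_eq_one, ← pow_add, ← hg]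
    congr 1
    have := mem_range.mp hj
    omega
  rw [orbitSum, sum_congr rfl hterm, ← sum_mul, sum_range_reflect (fun j => of R G (g ^ j)),
    ← orbitSum, mul_comm, of_mul_orbitSum hg]

theorem coeff_pow_mul_eq_of_of_mul_eq_self {z : MonoidAlgebra R G} (hz : of R G g * z = z) (n : ℕ)
    (x : G) : z.coeff (g ^ n * x) = z.coeff x := by
  have hzn : of R G (g ^ n) * z = z := by
    induction n with
    | zero => rw [pow_zero, map_one, one_mul]
    | succ n ih => rw [pow_succ', map_mul, mul_assoc, ih, hz]
  conv_lhs => rw [← hzn]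
  simp [of_apply]

end OrbitSum


section IdealSpan

variable {R G : Type*} [CommRing R] [CommGroup G] {q : ℕ} [NeZero q] {g : G}
  {π : G →* Multiplicative (ZMod q)}

theorem comapDomain_coeff_orbitSum_mul_of_ker (hπ : π g = Multiplicative.ofAdd 1) (h' : π.ker) :
    (orbitSum R g q * of R G h').coeff.comapDomain Subtype.val Subtype.val_injective.injOn =
      Finsupp.single h' 1 := by
  classical
  let e := π.powMulKerEquiv hπ
  ext h
  have he : (h : G) = e (0, h) := by simp [e, MonoidHom.powMulKerEquiv]
  calc (orbitSum R g q * of R G h').coeff h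
      = ∑ m : Fin q, Finsupp.single (e (m, h')) (1 : R) (e (0, h)) := by
        rw [he, orbitSum_eq_sum_fin, sum_mul, coeff_sum, Finsupp.finsetSum_apply]
        simp only [← map_mul]
        rfl
    _ = ∑ m : Fin q, if m = 0 then Finsupp.single h' (1 : R) h else 0 := by
        simp [Finsupp.single_apply, e.injective.eq_iff, ite_and]
    _ = Finsupp.single h' 1 h := by
        simp

theorem linearIndependent_orbitSum_mul_of_ker (hπ : π g = Multiplicative.ofAdd 1) :
    LinearIndependent R fun h : π.ker => orbitSum R g q * of R G h := by
  let restrict : MonoidAlgebra R G →ₗ[R] π.ker →₀ R :=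
    Finsupp.lcomapDomain Subtype.val Subtype.val_injective ∘ₗ (coeffLinearEquiv R).toLinearMap
  refine LinearIndependent.of_comp restrict ?_
  convert Finsupp.linearIndependent_single_one R π.ker with h'
  exact comapDomain_coeff_orbitSum_mul_of_ker hπ h'

variable [Fintype G]

theorem eq_orbitSum_mul_sum_ker (hπ : π g = Multiplicative.ofAdd 1) {z : MonoidAlgebra R G}
    (hz : of R G g * z = z) : z = orbitSum R g q * ∑ h : π.ker, z.coeff h • of R G h := by
  let e := π.powMulKerEquiv hπ
  have hterm : ∀ (m : Fin q) (h : π.ker),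
      single (e (m, h)) (z.coeff (e (m, h))) = of R G (g ^ (m : ℕ)) * (z.coeff h • of R G h) := by
    intro m h
    simp [e, MonoidHom.powMulKerEquiv, coeff_pow_mul_eq_of_of_mul_eq_self hz, of_apply]
  calc z = ∑ x, single x (z.coeff x) := by
        conv_lhs => rw [← z.sum_coeff_single]
        exact Finsupp.sum_fintype _ _ fun _ => single_zero _
    _ = ∑ p : Fin q × π.ker, single (e p) (z.coeff (e p)) := (e.sum_comp _).symm
    _ = ∑ h : π.ker, ∑ m : Fin q, of R G (g ^ (m : ℕ)) * (z.coeff h • of R G h) := by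
        rw [Fintype.sum_prod_type_right]
        simp only [hterm]
    _ = orbitSum R g q * ∑ h : π.ker, z.coeff h • of R G h := by
        simp only [orbitSum_eq_sum_fin, mul_sum, sum_mul]

variable (hg : g ^ q = 1) (hπ : π g = Multiplicative.ofAdd 1)
include hg hπ

theorem mem_ideal_span_orbitSum_iff {z : MonoidAlgebra R G} :
    z ∈ Ideal.span {orbitSum R g q} ↔ of R G g * z = z := by
  constructor
  · intro hz
    obtain ⟨a, rfl⟩ := Ideal.mem_span_singleton'.mp hz
    rw [mul_left_comm, of_mul_orbitSum hg]
  · intro hz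
    rw [eq_orbitSum_mul_sum_ker hπ hz]
    exact Ideal.mul_mem_right _ _ (Ideal.mem_span_singleton_self _)

theorem coe_ideal_span_orbitSum_eq_fixed :
    (Ideal.span {orbitSum R g q} : Set (MonoidAlgebra R G)) = {z | of R G g * z = z} :=
  Set.ext fun _ => mem_ideal_span_orbitSum_iff hg hπ

theorem coe_ideal_span_orbitSum_eq_mul_span_ker :
    (Ideal.span {orbitSum R g q} : Set (MonoidAlgebra R G)) =
      {z | ∃ y ∈ Submodule.span R (of R G '' (π.ker : Set G)), z = orbitSum R g q * y} := by
  ext z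
  constructor
  · intro hz
    refine ⟨_, ?_, eq_orbitSum_mul_sum_ker hπ ((mem_ideal_span_orbitSum_iff hg hπ).mp hz)⟩
    exact Submodule.sum_mem _ fun h _ => Submodule.smul_mem _ _
      (Submodule.subset_span ⟨h, h.2, rfl⟩)
  · rintro ⟨y, -, rfl⟩
    exact Ideal.mul_mem_right _ _ (Ideal.mem_span_singleton_self _)

theorem span_orbitSum_mul_of_ker :
    Submodule.span R (Set.range fun h : π.ker => orbitSum R g q * of R G h) =
      (Ideal.span {orbitSum R g q}).restrictScalars R := by
  apply le_antisymm
  · rw [Submodule.span_le]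
    rintro _ ⟨h, rfl⟩
    exact Ideal.mul_mem_right _ _ (Ideal.mem_span_singleton_self _)
  · intro z hz
    rw [Submodule.restrictScalars_mem, mem_ideal_span_orbitSum_iff hg hπ] at hz
    rw [eq_orbitSum_mul_sum_ker hπ hz, mul_sum]
    exact Submodule.sum_mem _ fun h _ => by
      rw [mul_smul_comm]
      exact Submodule.smul_mem _ _ (Submodule.subset_span ⟨h, rfl⟩)

noncomputable def orbitSumBasis :
    Module.Basis π.ker R ((Ideal.span {orbitSum R g q}).restrictScalars R) :=
  (Module.Basis.span (linearIndependent_orbitSum_mul_of_ker hπ)).map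
    (LinearEquiv.ofEq _ _ (span_orbitSum_mul_of_ker hg hπ))

end IdealSpan

end MonoidAlgebra

namespace GenFermatGA

section Coordinates

variable (ℓ k s : ℕ)

def coord (i : Fin (s - 1)) : H ℓ k s →* Multiplicative (ZMod (ℓ ^ k)) :=
  AddMonoidHom.toMultiplicative (Pi.evalAddMonoidHom _ i)

theorem coord_gen_self (i : Fin (s - 1)) :
    coord ℓ k s i (gen ℓ k s i) = Multiplicative.ofAdd 1 := by
  simp [coord, gen]

theorem coord_gen_of_ne {i j : Fin (s - 1)} (hji : j ≠ i) : coord ℓ k s i (gen ℓ k s j) = 1 := by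
  simp [coord, gen, hji]

theorem coord_allProd (i : Fin (s - 1)) :
    coord ℓ k s i (allProd ℓ k s) = Multiplicative.ofAdd 1 := by
  rw [allProd, map_prod, Finset.prod_eq_single i (fun j _ hji => coord_gen_of_ne ℓ k s hji)
    (by simp), coord_gen_self]

theorem pow_card_eq_one (x : H ℓ k s) : x ^ (ℓ ^ k) = 1 := by
  refine Multiplicative.toAdd.injective (funext fun j => ?_)
  simp

theorem gen_pow (j : Fin (s - 1)) (n : ℕ) :
    gen ℓ k s j ^ n = Multiplicative.ofAdd (Pi.single j (n : ZMod (ℓ ^ k))) := by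
  rw [gen, ← ofAdd_nsmul, ← Pi.single_smul, nsmul_eq_mul, mul_one]

theorem eq_prod_gen_pow [NeZero (ℓ ^ k)] (x : H ℓ k s) :
    x = ∏ j, gen ℓ k s j ^ (Multiplicative.toAdd x j).val := by
  refine Multiplicative.toAdd.injective ?_
  simp only [toAdd_prod, gen_pow, toAdd_ofAdd, ZMod.natCast_zmod_val]
  exact (Finset.univ_sum_single _).symm

theorem Ksub_eq_ker [NeZero (ℓ ^ k)] (i : Fin (s - 1)) : Ksub ℓ k s i = (coord ℓ k s i).ker := by
  apply le_antisymm
  · rw [Ksub, Subgroup.closure_le]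
    rintro _ ⟨j, hji, rfl⟩
    exact coord_gen_of_ne ℓ k s hji
  · intro x hx
    rw [eq_prod_gen_pow ℓ k s x]
    refine Subgroup.prod_mem _ fun j _ => ?_
    by_cases hji : j = i
    · subst hji
      have : Multiplicative.toAdd x j = 0 := by simpa [coord] using hx
      simp [this]
    · exact pow_mem (Subgroup.subset_closure ⟨j, hji, rfl⟩ : gen ℓ k s j ∈ Ksub ℓ k s i) _

theorem card_ker_coord [NeZero (ℓ ^ k)] (i : Fin (s - 1)) :
    Nat.card (coord ℓ k s i).ker = ℓ ^ (k * (s - 2)) := by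
  have hcard := (coord ℓ k s i).card_eq_mul_card_ker (coord_gen_self ℓ k s i)
  have hs : (ℓ ^ k) ^ (s - 1) = ℓ ^ k * ℓ ^ (k * (s - 2)) := by
    rw [show s - 1 = s - 2 + 1 by have := i.isLt; omega, pow_succ', pow_mul]
  rw [Nat.card_eq_fintype_card (α := H ℓ k s), Fintype.card_multiplicative, Fintype.card_fun,
    ZMod.card, Fintype.card_fin, hs] at hcard
  exact Nat.eq_of_mul_eq_mul_left (Nat.pos_of_neZero _) hcard.symm

theorem nonempty_basis_ideal_span_orbitSum [Fact ℓ.Prime] [NeZero (ℓ ^ k)] {i : Fin (s - 1)}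
    {g : H ℓ k s} (hcoord : coord ℓ k s i g = Multiplicative.ofAdd 1) :
    Nonempty (Module.Basis (Fin (ℓ ^ (k * (s - 2)))) ℤ_[ℓ]
      ((Ideal.span {orbitSum ℤ_[ℓ] g (ℓ ^ k)}).restrictScalars ℤ_[ℓ])) :=
  ⟨(orbitSumBasis (pow_card_eq_one ℓ k s g) hcoord).reindex
    ((Finite.equivFin _).trans (finCongr (card_ker_coord ℓ k s i)))⟩

theorem Sig_castLE [Fact ℓ.Prime] (i : Fin (s - 1)) :
    Sig ℓ k s (Fin.castLE (Nat.sub_le s 1) i) = orbitSum ℤ_[ℓ] (gen ℓ k s i) (ℓ ^ k) := by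
  simp [Sig, xbar, orbitSum]

theorem Sig_last [Fact ℓ.Prime] (h : s - 1 < s) :
    Sig ℓ k s ⟨s - 1, h⟩ = orbitSum ℤ_[ℓ] (allProd ℓ k s) (ℓ ^ k) := by
  have hx : xbar ℓ k s ⟨s - 1, h⟩ = (allProd ℓ k s)⁻¹ := by simp [xbar]
  rw [Sig, hx]
  exact orbitSum_inv (pow_card_eq_one ℓ k s _)

end Coordinates

/-- for `1 ≤ i ≤ s-1` the ideal `Σ_i·ℤ_ℓ[H₀]` equals the set
`Σ_i·ℤ_ℓ[K_i]` (where `ℤ_ℓ[K_i] ⊆ ℤ_ℓ[H₀]` is the `ℤ_ℓ`-span of `K_i`), and it is a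
free `ℤ_ℓ`-module of rank `ℓ^{k(s-2)}`; moreover `Σ_s·ℤ_ℓ[H₀]` equals the set of
elements fixed under multiplication by `x̄₁⋯x̄_{s-1}`, and it is also a free
`ℤ_ℓ`-module of rank `ℓ^{k(s-2)}`. -/
theorem statement15 (ℓ k s : ℕ) [Fact (Nat.Prime ℓ)] (hs : 3 ≤ s) :
    (∀ i : Fin (s - 1),
      (Ideal.span {Sig ℓ k s (Fin.castLE (Nat.sub_le s 1) i)} : Set (A ℓ k s)) =
        {z | ∃ y ∈ Submodule.span ℤ_[ℓ]
            (⇑(MonoidAlgebra.of ℤ_[ℓ] (H ℓ k s)) '' (Ksub ℓ k s i : Set (H ℓ k s))),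
          z = Sig ℓ k s (Fin.castLE (Nat.sub_le s 1) i) * y}) ∧
    (∀ i : Fin (s - 1),
      Nonempty (Module.Basis (Fin (ℓ ^ (k * (s - 2)))) ℤ_[ℓ]
        ↥(Submodule.restrictScalars ℤ_[ℓ]
          (Ideal.span {Sig ℓ k s (Fin.castLE (Nat.sub_le s 1) i)})))) ∧
    ((Ideal.span {Sig ℓ k s ⟨s - 1, by omega⟩} : Set (A ℓ k s)) =
      {z | MonoidAlgebra.of ℤ_[ℓ] (H ℓ k s) (allProd ℓ k s) * z = z}) ∧
    Nonempty (Module.Basis (Fin (ℓ ^ (k * (s - 2)))) ℤ_[ℓ]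
      ↥(Submodule.restrictScalars ℤ_[ℓ]
        (Ideal.span {Sig ℓ k s ⟨s - 1, by omega⟩}))) := by
  have : NeZero (ℓ ^ k) := ⟨pow_ne_zero _ (Fact.out : ℓ.Prime).ne_zero⟩
  let i₀ : Fin (s - 1) := ⟨0, by omega⟩
  refine ⟨fun i => ?_, fun i => ?_, ?_, ?_⟩
  · rw [Sig_castLE, Ksub_eq_ker]
    exact coe_ideal_span_orbitSum_eq_mul_span_ker (pow_card_eq_one ℓ k s _) (coord_gen_self ℓ k s i)
  · rw [Sig_castLE]
    exact nonempty_basis_ideal_span_orbitSum ℓ k s (coord_gen_self ℓ k s i)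
  · rw [Sig_last]
    exact coe_ideal_span_orbitSum_eq_fixed (pow_card_eq_one ℓ k s _) (coord_allProd ℓ k s i₀)
  · rw [Sig_last]
    exact nonempty_basis_ideal_span_orbitSum ℓ k s (coord_allProd ℓ k s i₀)

end GenFermatGA
end

section
/- Suppose β ∈ ℤ_ℓ[H₀] is such that for every j with 1 ≤ j ≤ s there exists β_j ∈ ℤ_ℓ[H₀] with x̄₁x̄₂⋯x̄_{j−1}·β = Σ_j·β_j (the empty product being 1). Then β is fixed under multiplication by every element of H₀; equivalently, β ∈ ℤ_ℓ·N, where N = Σ_{h ∈ H₀} h is the norm element of ℤ_ℓ[H₀]. -/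
/-!
Since `x̄_j ^ ℓᵏ = 1`, the geometric sum `Σ_j` is absorbed by `x̄_j`, so `x̄_j` fixes
`x̄₁⋯x̄_{j-1}·β = Σ_j·β_j`. In the commutative group algebra, translating by the unit
`x̄₁⋯x̄_{j-1}` does not change the left stabiliser, so `x̄_j` fixes `β`. Already
`x̄₁, …, x̄_{s-1}` generate `H₀`, so every `h ∈ H₀` fixes `β`, and comparing the coefficients
of `h·β = β` at `h` shows that all coefficients of `β` agree.
-/

open Finset

theorem mul_geom_sum_eq_of_pow_eq_one {R : Type*} [Ring R] {x : R} {n : ℕ} (hx : x ^ n = 1) :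
    x * ∑ i ∈ range n, x ^ i = ∑ i ∈ range n, x ^ i := by
  rw [← sub_eq_zero, ← sub_one_mul, mul_geom_sum, hx, sub_self]

theorem Multiplicative.pow_eq_one_of_pi_zmod {ι : Type*} {n : ℕ}
    (g : Multiplicative (ι → ZMod n)) : g ^ n = 1 := by
  rw [← toAdd_eq_zero, toAdd_pow]
  funext i
  simp

theorem Multiplicative.closure_range_ofAdd_single_one {ι : Type*} [Finite ι] [DecidableEq ι]
    {n : ℕ} : Subgroup.closure (Set.range fun i : ι ↦
      Multiplicative.ofAdd (Pi.single i (1 : ZMod n))) = ⊤ := by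
  refine (Subgroup.eq_top_iff' _).2 fun g ↦ ?_
  obtain ⟨f, rfl⟩ : ∃ f : ι → ZMod n, ofAdd f = g := ⟨g.toAdd, rfl⟩
  induction f using Pi.single_induction with
  | zero => exact one_mem _
  | add f f' hf hf' => exact mul_mem hf hf'
  | single i a =>
    have : ofAdd (Pi.single i a) =
        ofAdd (Pi.single (M := fun _ ↦ ZMod n) i 1) ^ (a.cast : ℤ) := by
      rw [← ofAdd_zsmul, ← Pi.single_smul, zsmul_eq_mul, mul_one, ZMod.intCast_zmod_cast]
    rw [this]
    exact zpow_mem (Subgroup.subset_closure (Set.mem_range_self i)) _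

namespace MonoidAlgebra

variable {R G : Type*} [Semiring R] [Group G]

def leftStabilizer (β : MonoidAlgebra R G) : Subgroup G where
  carrier := {g | of R G g * β = β}
  one_mem' := by
    change of R G 1 * β = β
    rw [map_one, one_mul]
  mul_mem' {a b} (ha : of R G a * β = β) (hb : of R G b * β = β) := by
    change of R G (a * b) * β = β
    rw [map_mul, mul_assoc, hb, ha]
  inv_mem' {g} (hg : of R G g * β = β) := by
    change of R G g⁻¹ * β = β
    conv_lhs => rw [← hg, ← mul_assoc, ← map_mul, inv_mul_cancel, map_one, one_mul]

theorem mem_leftStabilizer {β : MonoidAlgebra R G} {g : G} :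
    g ∈ leftStabilizer β ↔ of R G g * β = β := Iff.rfl

theorem leftStabilizer_of_mul {G : Type*} [CommGroup G] (g : G) (β : MonoidAlgebra R G) :
    leftStabilizer (of R G g * β) = leftStabilizer β := by
  ext x
  rw [mem_leftStabilizer, mem_leftStabilizer, ← mul_assoc, ← map_mul, mul_comm x g, map_mul,
    mul_assoc]
  exact ((Group.isUnit g).map (of R G)).mul_right_inj

theorem mem_leftStabilizer_geom_sum_mul {R : Type*} [Ring R] {x : G} {n : ℕ} (hx : x ^ n = 1)
    (δ : MonoidAlgebra R G) :
    x ∈ leftStabilizer ((∑ i ∈ range n, of R G (x ^ i)) * δ) := by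
  simp only [mem_leftStabilizer, map_pow, ← mul_assoc, mul_geom_sum_eq_of_pow_eq_one
    (by rw [← map_pow, hx, map_one] : of R G x ^ n = 1)]

theorem eq_coeff_one_smul_sum_of_leftStabilizer_eq_top [Fintype G] {β : MonoidAlgebra R G}
    (hβ : leftStabilizer β = ⊤) : β = β.coeff 1 • ∑ g : G, of R G g := by
  ext x
  have hx : (of R G x * β).coeff x = β.coeff x := by
    rw [mem_leftStabilizer.1 (hβ ▸ Subgroup.mem_top x)]
  rw [of_apply, coeff_single_mul_apply, inv_mul_cancel, one_mul] at hx
  simp [coeff_sum, ← hx]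

end MonoidAlgebra

namespace GenFermatGA

open MonoidAlgebra

theorem closure_range_gen (ℓ k s : ℕ) : Subgroup.closure (Set.range (gen ℓ k s)) = ⊤ :=
  Multiplicative.closure_range_ofAdd_single_one

theorem xbar_castLE (ℓ k s : ℕ) (t : Fin (s - 1)) :
    xbar ℓ k s (Fin.castLE (Nat.sub_le s 1) t) = gen ℓ k s t := by
  simp [xbar]

theorem statement16_general (ℓ k s : ℕ) [Fact (Nat.Prime ℓ)]
    (β : A ℓ k s)
    (hβ : ∀ j : Fin s, ∃ βj : A ℓ k s,
      MonoidAlgebra.of ℤ_[ℓ] (H ℓ k s) (prefixProd ℓ k s j) * β = Sig ℓ k s j * βj) :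
    (∀ h : H ℓ k s, MonoidAlgebra.of ℤ_[ℓ] (H ℓ k s) h * β = β) ∧
    ∃ c : ℤ_[ℓ], β = c • ∑ h : H ℓ k s, MonoidAlgebra.of ℤ_[ℓ] (H ℓ k s) h := by
  have hxbar (j : Fin s) : xbar ℓ k s j ∈ leftStabilizer β := by
    obtain ⟨βj, hβj⟩ := hβ j
    rw [← leftStabilizer_of_mul (prefixProd ℓ k s j), hβj]
    exact mem_leftStabilizer_geom_sum_mul (Multiplicative.pow_eq_one_of_pi_zmod _) βj
  have htop : leftStabilizer β = ⊤ := by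
    rw [eq_top_iff, ← closure_range_gen, Subgroup.closure_le]
    rintro _ ⟨t, rfl⟩
    exact xbar_castLE ℓ k s t ▸ hxbar _
  exact ⟨fun h ↦ mem_leftStabilizer.1 (htop ▸ Subgroup.mem_top h), _,
    eq_coeff_one_smul_sum_of_leftStabilizer_eq_top htop⟩

/-- if `β ∈ ℤ_ℓ[H₀]` is such that for every `1 ≤ j ≤ s` there is
`β_j` with `x̄₁⋯x̄_{j-1}·β = Σ_j·β_j`, then `β` is fixed under multiplication by every
element of `H₀`; equivalently `β ∈ ℤ_ℓ·N` with `N = Σ_{h ∈ H₀} h` the norm element. -/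
theorem statement16 (ℓ k s : ℕ) [Fact (Nat.Prime ℓ)] (hk : 1 ≤ k) (hs : 3 ≤ s)
    (β : A ℓ k s)
    (hβ : ∀ j : Fin s, ∃ βj : A ℓ k s,
      MonoidAlgebra.of ℤ_[ℓ] (H ℓ k s) (prefixProd ℓ k s j) * β = Sig ℓ k s j * βj) :
    (∀ h : H ℓ k s, MonoidAlgebra.of ℤ_[ℓ] (H ℓ k s) h * β = β) ∧
    ∃ c : ℤ_[ℓ], β = c • ∑ h : H ℓ k s, MonoidAlgebra.of ℤ_[ℓ] (H ℓ k s) h :=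
  statement16_general ℓ k s β hβ

end GenFermatGA
end
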